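/- arXiv:2503.02213 — 6 statements merged into one kernel-verified Lean document; each statement's English description precedes it below -/
import Mathlib

section
/- For all n ≥ 0 and p, q ≥ 1, the cardinality of GSCM_n^{1,0}(p,q) equals ∑_{a=0}^n C(a+(p+1)q−1, a)·C(n−a+pq−1, n−a) − ∑_{a=0}^n C(a+pq−1, a)·C(n−a+pq−1, n−a). -/
/-- Generalized signed contingency matrices of type `(0,0)`: `p × q` matrices of signed numbers
`(a⁺, a⁻)` with total absolute value `n`. -/
def GSCM00 (n p q : ℕ) : Set (Matrix (Fin p) (Fin q) (ℕ × ℕ)) :=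
  {A | ∑ i, ∑ j, ((A i j).1 + (A i j).2) = n}

/-- Generalized signed contingency matrices of type `(1,0)`: `(p+1) × q` matrices of signed
numbers with total absolute value `n`, whose last row has vanishing negative parts and
positive total positive part. -/
def GSCM10 (n p q : ℕ) : Set (Matrix (Fin (p + 1)) (Fin q) (ℕ × ℕ)) :=
  {A | (∑ i, ∑ j, ((A i j).1 + (A i j).2) = n) ∧
       (∀ j, (A (Fin.last p) j).2 = 0) ∧ 0 < ∑ j, (A (Fin.last p) j).1}

/-- Generalized signed contingency matrices of type `(0,1)`: `p × (q+1)` matrices of signed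
numbers with total absolute value `n`, whose last column has vanishing negative parts and
positive total positive part. -/
def GSCM01 (n p q : ℕ) : Set (Matrix (Fin p) (Fin (q + 1)) (ℕ × ℕ)) :=
  {A | (∑ i, ∑ j, ((A i j).1 + (A i j).2) = n) ∧
       (∀ i, (A i (Fin.last q)).2 = 0) ∧ 0 < ∑ i, (A i (Fin.last q)).1}

/-- Generalized signed contingency matrices of type `(1,1)`: `(p+1) × (q+1)` matrices of signed
numbers with total absolute value `n`, whose last row and last column have vanishing negative
parts and positive total positive parts. -/
def GSCM11 (n p q : ℕ) : Set (Matrix (Fin (p + 1)) (Fin (q + 1)) (ℕ × ℕ)) :=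
  {A | (∑ i, ∑ j, ((A i j).1 + (A i j).2) = n) ∧
       (∀ j, (A (Fin.last p) j).2 = 0) ∧ (∀ i, (A i (Fin.last q)).2 = 0) ∧
       0 < ∑ j, (A (Fin.last p) j).1 ∧ 0 < ∑ i, (A i (Fin.last q)).1}

/-- `|GSCM_n(p,q)|`, the total number of generalized signed contingency matrices. -/
noncomputable def GSCMcard (n p q : ℕ) : ℕ :=
  Nat.card (GSCM00 n p q) + Nat.card (GSCM10 n p q) +
    Nat.card (GSCM01 n p q) + Nat.card (GSCM11 n p q)

open Finset

namespace GSCMAux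

variable {α β γ : Type*} [Fintype α] [Fintype β] [Fintype γ]

lemma apply_le (f : γ → ℕ) {n : ℕ} (hf : ∑ x, f x = n) (a : γ) : f a ≤ n :=
  hf ▸ Finset.single_le_sum (fun i _ => Nat.zero_le (f i)) (Finset.mem_univ a)

instance instFinite (n : ℕ) : Finite {f : γ → ℕ // ∑ x, f x = n} := by
  apply Finite.of_injective
    (fun f => fun a => (⟨f.1 a, Nat.lt_succ_of_le (apply_le f.1 f.2 a)⟩ : Fin (n + 1)))
  intro f g h
  exact Subtype.ext (funext fun a => congrArg Fin.val (congrFun h a))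

/-- Reindexing equivalence. -/
def reindex (e : α ≃ β) (n : ℕ) :
    {f : β → ℕ // ∑ x, f x = n} ≃ {f : α → ℕ // ∑ x, f x = n} where
  toFun f := ⟨f.1 ∘ e, (Equiv.sum_comp e f.1).trans f.2⟩
  invFun g := ⟨g.1 ∘ e.symm, (Equiv.sum_comp e.symm g.1).trans g.2⟩
  left_inv f := by apply Subtype.ext; funext x; simp
  right_inv g := by apply Subtype.ext; funext x; simp

/-- Splitting equivalence. -/
def splitEquiv (n : ℕ) :
    {f : α ⊕ β → ℕ // ∑ x, f x = n} ≃
      Σ a : Fin (n + 1),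
        {g : α → ℕ // ∑ x, g x = a.val} × {h : β → ℕ // ∑ x, h x = n - a.val} where
  toFun f :=
    ⟨⟨∑ x, f.1 (Sum.inl x), by
        have h := f.2; rw [Fintype.sum_sum_type] at h; omega⟩,
      ⟨f.1 ∘ Sum.inl, rfl⟩,
      ⟨f.1 ∘ Sum.inr, by
        have h := f.2; rw [Fintype.sum_sum_type] at h
        simp only [Function.comp_apply]; omega⟩⟩
  invFun x :=
    ⟨Sum.elim x.2.1.1 x.2.2.1, by
      rw [Fintype.sum_sum_type]
      have h1 := x.2.1.2; have h2 := x.2.2.2; have h3 := x.1.isLt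
      simp only [Sum.elim_inl, Sum.elim_inr]
      omega⟩
  left_inv f := by apply Subtype.ext; funext x; cases x <;> rfl
  right_inv := by
    rintro ⟨⟨a, ha⟩, ⟨g, hg⟩, ⟨h, hh⟩⟩
    have key : ∑ x : α, Sum.elim g h (Sum.inl x) = a := by simpa using hg
    subst key
    rfl

lemma card_split (n : ℕ) :
    Nat.card {f : α ⊕ β → ℕ // ∑ x, f x = n} =
      ∑ a ∈ range (n + 1),
        Nat.card {g : α → ℕ // ∑ x, g x = a} *
          Nat.card {h : β → ℕ // ∑ x, h x = n - a} := by
  rw [Nat.card_congr (splitEquiv n)]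
  letI : ∀ a : Fin (n + 1),
      Fintype ({g : α → ℕ // ∑ x, g x = a.val} × {h : β → ℕ // ∑ x, h x = n - a.val}) :=
    fun a => Fintype.ofFinite _
  rw [Nat.card_eq_fintype_card, Fintype.card_sigma]
  rw [← Fin.sum_univ_eq_sum_range (fun a =>
    Nat.card {g : α → ℕ // ∑ x, g x = a} * Nat.card {h : β → ℕ // ∑ x, h x = n - a}) (n + 1)]
  refine Finset.sum_congr rfl fun a _ => ?_
  rw [← Nat.card_eq_fintype_card, Nat.card_prod]

lemma card_one (m : ℕ) : Nat.card {f : Fin 1 → ℕ // ∑ i, f i = m} = 1 := by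
  haveI : Unique {f : Fin 1 → ℕ // ∑ i, f i = m} :=
    { default := ⟨fun _ => m, by simp⟩
      uniq := by
        rintro ⟨f, hf⟩
        apply Subtype.ext
        funext i
        rw [Fin.sum_univ_one] at hf
        have hi : i = 0 := Subsingleton.elim _ _
        show f i = m
        rw [hi, hf] }
  exact Nat.card_unique

lemma hockey (k n : ℕ) :
    ∑ a ∈ range (n + 1), (a + k - 1).choose a = (n + (k + 1) - 1).choose n := by
  obtain _ | m := k
  · rw [Finset.sum_eq_single 0]
    · simp
    · intro b _ hb
      exact Nat.choose_eq_zero_of_lt (by omega)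
    · intro h; exact absurd (Finset.mem_range.2 (by omega)) h
  · have h1 : ∀ a, (a + (m + 1) - 1).choose a = (a + m).choose m := by
      intro a
      have h : a + (m + 1) - 1 = a + m := by omega
      rw [h, Nat.choose_symm_add]
    simp only [h1]
    rw [Nat.sum_range_add_choose n m]
    have h2 : n + (m + 1 + 1) - 1 = n + m + 1 := by omega
    rw [h2, ← Nat.choose_symm (show n ≤ n + m + 1 by omega)]
    congr 1
    omega

lemma card_tuple : ∀ (k n : ℕ),
    Nat.card {f : Fin k → ℕ // ∑ i, f i = n} = (n + k - 1).choose n := by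
  intro k
  induction k with
  | zero =>
    intro n
    match n with
    | 0 =>
      haveI : Unique {f : Fin 0 → ℕ // ∑ i, f i = 0} :=
        { default := ⟨fun i => i.elim0, by simp⟩
          uniq := by rintro ⟨f, hf⟩; apply Subtype.ext; funext i; exact i.elim0 }
      simpa using Nat.card_unique
    | (n + 1) =>
      haveI : IsEmpty {f : Fin 0 → ℕ // ∑ i, f i = n + 1} := by
        constructor; rintro ⟨f, hf⟩; simp at hf
      rw [Nat.card_of_isEmpty]
      have : n + 1 + 0 - 1 = n := by omega
      rw [this]
      exact (Nat.choose_eq_zero_of_lt (by omega)).symm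
  | succ k ih =>
    intro n
    have e : {f : Fin (k + 1) → ℕ // ∑ i, f i = n} ≃
        {f : Fin k ⊕ Fin 1 → ℕ // ∑ x, f x = n} :=
      reindex (finSumFinEquiv : Fin k ⊕ Fin 1 ≃ Fin (k + 1)) n
    rw [Nat.card_congr e, card_split]
    have hsum : ∑ a ∈ range (n + 1),
        Nat.card {g : Fin k → ℕ // ∑ x, g x = a} *
          Nat.card {h : Fin 1 → ℕ // ∑ x, h x = n - a}
        = ∑ a ∈ range (n + 1), (a + k - 1).choose a := by
      refine Finset.sum_congr rfl fun a _ => ?_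
      rw [ih a, card_one, mul_one]
    rw [hsum, hockey]

lemma card_fun (γ : Type*) [Fintype γ] (n : ℕ) :
    Nat.card {f : γ → ℕ // ∑ x, f x = n} = (n + Fintype.card γ - 1).choose n := by
  rw [Nat.card_congr (reindex (Fintype.equivFin γ).symm n), card_tuple]

lemma vandermonde (s t n : ℕ) :
    ∑ a ∈ range (n + 1), (a + s - 1).choose a * (n - a + t - 1).choose (n - a)
      = (n + (s + t) - 1).choose n := by
  have h := card_split (α := Fin s) (β := Fin t) n
  rw [card_fun] at h
  simp only [Fintype.card_sum, Fintype.card_fin] at h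
  rw [h]
  refine Finset.sum_congr rfl fun a _ => ?_
  rw [card_tuple, card_tuple]

end GSCMAux

namespace GSCMAux

variable {p q : ℕ}

/-- The function associated to a matrix. -/
def mfun (p q : ℕ) (A : Matrix (Fin (p + 1)) (Fin q) (ℕ × ℕ)) :
    (Fin p × Fin q × Bool) ⊕ Fin q → ℕ :=
  Sum.elim (fun y => if y.2.2 then (A y.1.castSucc y.2.1).1 else (A y.1.castSucc y.2.1).2)
    (fun j => (A (Fin.last p) j).1)

lemma key_sum (A : Matrix (Fin (p + 1)) (Fin q) (ℕ × ℕ))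
    (h2 : ∀ j, (A (Fin.last p) j).2 = 0) :
    ∑ x, mfun p q A x = ∑ i, ∑ j, ((A i j).1 + (A i j).2) := by
  rw [Fintype.sum_sum_type]
  simp only [mfun, Sum.elim_inl, Sum.elim_inr]
  rw [Fin.sum_univ_castSucc (f := fun i => ∑ j, ((A i j).1 + (A i j).2))]
  congr 1
  · rw [Fintype.sum_prod_type]
    refine Finset.sum_congr rfl fun i _ => ?_
    rw [Fintype.sum_prod_type]
    refine Finset.sum_congr rfl fun j _ => ?_
    simp [Fintype.sum_bool]
  · refine Finset.sum_congr rfl fun j _ => ?_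
    simp [h2 j]

/-- Matrix from a function. -/
def mmat (p q : ℕ) (f : (Fin p × Fin q × Bool) ⊕ Fin q → ℕ) :
    Matrix (Fin (p + 1)) (Fin q) (ℕ × ℕ) :=
  Matrix.of fun i j =>
    Fin.lastCases (motive := fun _ => ℕ × ℕ) (f (Sum.inr j), 0)
      (fun i' => (f (Sum.inl (i', j, true)), f (Sum.inl (i', j, false)))) i

lemma mmat_last (f : (Fin p × Fin q × Bool) ⊕ Fin q → ℕ) (j : Fin q) :
    mmat p q f (Fin.last p) j = (f (Sum.inr j), 0) := by
  simp [mmat, Fin.lastCases_last]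

lemma mmat_castSucc (f : (Fin p × Fin q × Bool) ⊕ Fin q → ℕ) (i : Fin p) (j : Fin q) :
    mmat p q f (Fin.castSucc i) j = (f (Sum.inl (i, j, true)), f (Sum.inl (i, j, false))) := by
  simp [mmat, Fin.lastCases_castSucc]

lemma mfun_mmat (f : (Fin p × Fin q × Bool) ⊕ Fin q → ℕ) :
    mfun p q (mmat p q f) = f := by
  funext x
  rcases x with ⟨i, j, b⟩ | j
  · simp only [mfun, Sum.elim_inl, mmat_castSucc]
    cases b <;> rfl
  · simp only [mfun, Sum.elim_inr, mmat_last]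

lemma mmat_mfun (A : Matrix (Fin (p + 1)) (Fin q) (ℕ × ℕ))
    (h2 : ∀ j, (A (Fin.last p) j).2 = 0) :
    mmat p q (mfun p q A) = A := by
  funext i j
  induction i using Fin.lastCases with
  | last =>
    rw [mmat_last]
    show ((A (Fin.last p) j).1, 0) = A (Fin.last p) j
    rw [← h2 j]
  | cast i =>
    rw [mmat_castSucc]
    rfl

/-- The main equivalence for `GSCM10`. -/
def gscm10Equiv (n p q : ℕ) :
    (GSCM10 n p q) ≃
      {f : (Fin p × Fin q × Bool) ⊕ Fin q → ℕ //
        (∑ x, f x = n) ∧ 0 < ∑ j, f (Sum.inr j)} where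
  toFun A :=
    ⟨mfun p q A.1, by
      obtain ⟨h1, h2, h3⟩ := A.2
      refine ⟨(key_sum A.1 h2).trans h1, ?_⟩
      simpa [mfun] using h3⟩
  invFun f :=
    ⟨mmat p q f.1, by
      have h2 : ∀ j, (mmat p q f.1 (Fin.last p) j).2 = 0 := fun j => by rw [mmat_last]
      refine ⟨?_, h2, ?_⟩
      · rw [← key_sum (mmat p q f.1) h2, mfun_mmat]
        exact f.2.1
      · have := f.2.2
        simp only [mmat_last]
        exact this⟩
  left_inv A := Subtype.ext (mmat_mfun A.1 A.2.2.1)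
  right_inv f := Subtype.ext (mfun_mmat f.1)

lemma card_pos (α β : Type*) [Fintype α] [Fintype β] (n : ℕ) :
    Nat.card {f : α ⊕ β → ℕ // (∑ x, f x = n) ∧ 0 < ∑ b, f (Sum.inr b)}
        + Nat.card {g : α → ℕ // ∑ x, g x = n}
      = Nat.card {f : α ⊕ β → ℕ // ∑ x, f x = n} := by
  classical
  let S := {f : α ⊕ β → ℕ // ∑ x, f x = n}
  let P : S → Prop := fun x => 0 < ∑ b, x.1 (Sum.inr b)
  have eP : {x : S // P x} ≃
      {f : α ⊕ β → ℕ // (∑ x, f x = n) ∧ 0 < ∑ b, f (Sum.inr b)} :=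
    { toFun := fun x => ⟨x.1.1, x.1.2, x.2⟩
      invFun := fun f => ⟨⟨f.1, f.2.1⟩, f.2.2⟩
      left_inv := fun x => rfl
      right_inv := fun f => rfl }
  have eN : {x : S // ¬ P x} ≃ {g : α → ℕ // ∑ x, g x = n} :=
    { toFun := fun x => ⟨x.1.1 ∘ Sum.inl, by
        have hf := x.1.2
        rw [Fintype.sum_sum_type] at hf
        have hP : ¬ 0 < ∑ b, x.1.1 (Sum.inr b) := x.2
        simp only [Function.comp_apply]
        omega⟩
      invFun := fun g => ⟨⟨Sum.elim g.1 0, by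
          rw [Fintype.sum_sum_type]
          simp [g.2]⟩, by
          show ¬ 0 < ∑ b : β, Sum.elim g.1 (fun _ : β => (0 : ℕ)) (Sum.inr b)
          simp⟩
      left_inv := fun x => by
        apply Subtype.ext
        apply Subtype.ext
        funext y
        rcases y with a | b
        · rfl
        · show (0 : ℕ) = x.1.1 (Sum.inr b)
          have hP : ¬ 0 < ∑ b, x.1.1 (Sum.inr b) := x.2
          have h0 : ∑ b, x.1.1 (Sum.inr b) = 0 := by omega
          exact (Finset.sum_eq_zero_iff.1 h0 b (Finset.mem_univ b)).symm
      right_inv := fun g => Subtype.ext (funext fun a => rfl) }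
  rw [Nat.card_congr eP.symm, Nat.card_congr eN.symm, ← Nat.card_sum,
    Nat.card_congr (Equiv.sumCompl P)]

end GSCMAux

/-- The cardinality of `GSCM_n^{1,0}(p,q)` equals
`∑_{a=0}^n C(a + (p+1)q − 1, a) · C(n − a + pq − 1, n − a)
  − ∑_{a=0}^n C(a + pq − 1, a) · C(n − a + pq − 1, n − a)`. -/
theorem card_GSCM10 (n p q : ℕ) (hp : 1 ≤ p) (hq : 1 ≤ q) :
    (Nat.card (GSCM10 n p q) : ℤ) =
      (∑ a ∈ Finset.range (n + 1),
        ((a + (p + 1) * q - 1).choose a * (n - a + p * q - 1).choose (n - a) : ℤ)) -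
      (∑ a ∈ Finset.range (n + 1),
        ((a + p * q - 1).choose a * (n - a + p * q - 1).choose (n - a) : ℤ)) := by
  classical
  open GSCMAux in
  have hcard : Nat.card (GSCM10 n p q)
      = Nat.card {f : (Fin p × Fin q × Bool) ⊕ Fin q → ℕ //
          (∑ x, f x = n) ∧ 0 < ∑ j, f (Sum.inr j)} :=
    Nat.card_congr (gscm10Equiv n p q)
  have hpos := GSCMAux.card_pos (Fin p × Fin q × Bool) (Fin q) n
  have h1 : Nat.card {f : (Fin p × Fin q × Bool) ⊕ (Fin q) → ℕ // ∑ x, f x = n}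
      = (n + (p * q * 2 + q) - 1).choose n := by
    rw [GSCMAux.card_fun]
    congr 2
    simp [Fintype.card_sum, Fintype.card_prod]
    ring
  have h2 : Nat.card {g : Fin p × Fin q × Bool → ℕ // ∑ x, g x = n}
      = (n + p * q * 2 - 1).choose n := by
    rw [GSCMAux.card_fun]
    congr 2
    simp [Fintype.card_prod]
    ring
  have hv1 : ∑ a ∈ Finset.range (n + 1),
      (a + (p + 1) * q - 1).choose a * (n - a + p * q - 1).choose (n - a)
      = (n + (p * q * 2 + q) - 1).choose n := by
    rw [GSCMAux.vandermonde ((p + 1) * q) (p * q) n]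
    congr 2
    ring
  have hv2 : ∑ a ∈ Finset.range (n + 1),
      (a + p * q - 1).choose a * (n - a + p * q - 1).choose (n - a)
      = (n + p * q * 2 - 1).choose n := by
    rw [GSCMAux.vandermonde (p * q) (p * q) n]
    congr 2
    ring
  have e1 : (∑ a ∈ Finset.range (n + 1),
      ((a + (p + 1) * q - 1).choose a * (n - a + p * q - 1).choose (n - a) : ℤ))
      = ((∑ a ∈ Finset.range (n + 1),
        (a + (p + 1) * q - 1).choose a * (n - a + p * q - 1).choose (n - a) : ℕ) : ℤ) := by
    push_cast
    rfl
  have e2 : (∑ a ∈ Finset.range (n + 1),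
      ((a + p * q - 1).choose a * (n - a + p * q - 1).choose (n - a) : ℤ))
      = ((∑ a ∈ Finset.range (n + 1),
        (a + p * q - 1).choose a * (n - a + p * q - 1).choose (n - a) : ℕ) : ℤ) := by
    push_cast
    rfl
  rw [e1, e2, hv1, hv2, hcard, ← h1, ← h2, ← hpos]
  push_cast
  ring
end

section
/- For all n ≥ 0 and p, q ≥ 1, the cardinality of GSCM_n^{1,1}(p,q) equals ∑_{a=0}^n C(a+(p+1)(q+1)−1, a)·C(n−a+pq−1, n−a) − ∑_{a=0}^n C(a+p(q+1)−1, a)·C(n−a+pq−1, n−a) − ∑_{a=0}^n C(a+(p+1)q−1, a)·C(n−a+pq−1, n−a) + ∑_{a=0}^n C(a+pq−1, a)·C(n−a+pq−1, n−a). -/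
section Aux
open Finset

private lemma aux_finite_mat {r c : ℕ} (m : ℕ) (Q : (Fin r → Fin c → ℕ) → Prop)
    (h : ∀ f, Q f → ∑ i, ∑ j, f i j = m) : Finite {f : Fin r → Fin c → ℕ // Q f} := by
  classical
  have hb : ∀ (f : {f : Fin r → Fin c → ℕ // Q f}) (i : Fin r) (j : Fin c),
      f.1 i j < m + 1 := by
    intro f i j
    have h1 : f.1 i j ≤ ∑ j, f.1 i j :=
      Finset.single_le_sum (fun k _ => Nat.zero_le _) (Finset.mem_univ j)
    have h2 : (∑ j, f.1 i j) ≤ ∑ i, ∑ j, f.1 i j :=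
      Finset.single_le_sum (f := fun i => ∑ j, f.1 i j) (fun k _ => Nat.zero_le _)
        (Finset.mem_univ i)
    have := h f.1 f.2
    omega
  apply Finite.of_injective
    (fun f : {f : Fin r → Fin c → ℕ // Q f} =>
      (fun i j => (⟨f.1 i j, hb f i j⟩ : Fin (m + 1))))
  intro f g hfg
  ext i j
  have := congrFun (congrFun hfg i) j
  simpa [Fin.ext_iff] using this

private lemma card_split {α : Type*} (P Q : α → Prop) (hf : Finite {x : α // P x}) :
    Nat.card {x : α // P x ∧ Q x} + Nat.card {x : α // P x ∧ ¬Q x}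
      = Nat.card {x : α // P x} := by
  classical
  haveI := hf
  have e1 : {x : α // P x ∧ Q x} ≃ {y : {x : α // P x} // Q y.1} :=
    (Equiv.subtypeSubtypeEquivSubtypeInter P Q).symm
  have e2 : {x : α // P x ∧ ¬Q x} ≃ {y : {x : α // P x} // ¬Q y.1} :=
    (Equiv.subtypeSubtypeEquivSubtypeInter P (fun x => ¬Q x)).symm
  rw [Nat.card_congr e1, Nat.card_congr e2, ← Nat.card_sum]
  exact Nat.card_congr (Equiv.sumCompl _)

private lemma card_count {α : Type*} [Fintype α] [DecidableEq α] (m : ℕ) :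
    Nat.card {f : α → ℕ // ∑ a, f a = m} = (m + Fintype.card α - 1).choose m := by
  rw [← Nat.card_congr (Sym.equivNatSumOfFintype α m), Nat.card_eq_fintype_card,
    Sym.card_sym_eq_multichoose, Nat.multichoose_eq, Nat.add_comm]

private lemma card_count_support {α : Type*} [Fintype α] [DecidableEq α]
    (s : Finset α) (m : ℕ) :
    Nat.card {f : α → ℕ // (∑ a, f a = m) ∧ ∀ x ∉ s, f x = 0}
      = (m + s.card - 1).choose m := by
  classical
  have e : {f : α → ℕ // (∑ a, f a = m) ∧ ∀ x ∉ s, f x = 0}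
      ≃ {g : ↥s → ℕ // ∑ a, g a = m} :=
    { toFun := fun f => ⟨fun x => f.1 x.1, by
        rw [Finset.sum_coe_sort s f.1, Finset.sum_subset (Finset.subset_univ s)
          (fun x _ hx => f.2.2 x hx)]
        exact f.2.1⟩
      invFun := fun g => ⟨fun x => if h : x ∈ s then g.1 ⟨x, h⟩ else 0, by
        constructor
        · rw [← Finset.sum_subset (Finset.subset_univ s)
            (fun x _ hx => dif_neg hx),
            ← Finset.sum_attach s (fun x => if h : x ∈ s then g.1 ⟨x, h⟩ else 0)]
          have hstep : (∑ x ∈ s.attach, if h : (x : α) ∈ s then g.1 ⟨x, h⟩ else 0)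
              = ∑ x : ↥s, g.1 x := by
            rw [← Finset.univ_eq_attach]
            refine Finset.sum_congr rfl fun x _ => ?_
            rw [dif_pos x.2]
          rw [hstep]
          exact g.2
        · intro x hx; exact dif_neg hx⟩
      left_inv := fun f => by
        ext x
        by_cases h : x ∈ s
        · simp [h]
        · simp [h, f.2.2 x h]
      right_inv := fun g => by
        ext x
        simp
    }
  rw [Nat.card_congr e, card_count, Fintype.card_coe]

private lemma card_mat (r c m : ℕ) :
    Nat.card {f : Fin r → Fin c → ℕ // ∑ i, ∑ j, f i j = m}
      = (m + r * c - 1).choose m := by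
  classical
  have e : {f : Fin r → Fin c → ℕ // ∑ i, ∑ j, f i j = m}
      ≃ {g : Fin r × Fin c → ℕ // ∑ x, g x = m} :=
    (Equiv.curry (Fin r) (Fin c) ℕ).symm.subtypeEquiv fun f => by
      simp [Fintype.sum_prod_type, Function.uncurry]
  rw [Nat.card_congr e, card_count]
  simp

private lemma card_mat_cond (r c m : ℕ) (Q : (Fin r → Fin c → ℕ) → Prop)
    (s : Finset (Fin r × Fin c))
    (hQ : ∀ f, Q f ↔ ∀ x ∉ s, f x.1 x.2 = 0) :
    Nat.card {f : Fin r → Fin c → ℕ // (∑ i, ∑ j, f i j = m) ∧ Q f}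
      = (m + s.card - 1).choose m := by
  classical
  have e : {f : Fin r → Fin c → ℕ // (∑ i, ∑ j, f i j = m) ∧ Q f}
      ≃ {g : Fin r × Fin c → ℕ // (∑ x, g x = m) ∧ ∀ x ∉ s, g x = 0} :=
    (Equiv.curry (Fin r) (Fin c) ℕ).symm.subtypeEquiv fun f => by
      rw [hQ]
      simp [Fintype.sum_prod_type, Function.uncurry]
  rw [Nat.card_congr e, card_count_support]

private lemma card_pos (p q a : ℕ) :
    (Nat.card {f : Fin (p + 1) → Fin (q + 1) → ℕ //
        (∑ i, ∑ j, f i j = a) ∧ 0 < (∑ j, f (Fin.last p) j) ∧ 0 < (∑ i, f i (Fin.last q))} : ℤ)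
      = ((a + (p + 1) * (q + 1) - 1).choose a : ℤ) - ((a + p * (q + 1) - 1).choose a : ℤ)
        - ((a + (p + 1) * q - 1).choose a : ℤ) + ((a + p * q - 1).choose a : ℤ) := by
  classical
  set S : (Fin (p + 1) → Fin (q + 1) → ℕ) → Prop := fun f => ∑ i, ∑ j, f i j = a with hS
  set R : (Fin (p + 1) → Fin (q + 1) → ℕ) → Prop := fun f => ∑ j, f (Fin.last p) j = 0 with hR
  set C : (Fin (p + 1) → Fin (q + 1) → ℕ) → Prop := fun f => ∑ i, f i (Fin.last q) = 0 with hC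
  -- finiteness
  have fin1 : Finite {f : Fin (p + 1) → Fin (q + 1) → ℕ // S f} :=
    aux_finite_mat a S (fun _ h => h)
  have fin2 : Finite {f : Fin (p + 1) → Fin (q + 1) → ℕ // S f ∧ ¬ R f} :=
    aux_finite_mat a _ (fun _ h => h.1)
  have fin3 : Finite {f : Fin (p + 1) → Fin (q + 1) → ℕ // S f ∧ C f} :=
    aux_finite_mat a _ (fun _ h => h.1)
  -- splits
  have e1 := card_split S R fin1
  have e2 := card_split (fun f => S f ∧ ¬ R f) C fin2
  have e3 := card_split (fun f => S f ∧ C f) R fin3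
  -- identify pieces
  have hfull : Nat.card {f : Fin (p + 1) → Fin (q + 1) → ℕ // S f}
      = (a + (p + 1) * (q + 1) - 1).choose a := card_mat _ _ _
  have hsR : Nat.card {f : Fin (p + 1) → Fin (q + 1) → ℕ // S f ∧ R f}
      = (a + p * (q + 1) - 1).choose a := by
    have := card_mat_cond (p + 1) (q + 1) a R ((univ.erase (Fin.last p)) ×ˢ univ) ?_
    · rw [this]
      congr 2
      rw [Finset.card_product, Finset.card_erase_of_mem (Finset.mem_univ _)]
      simp [Finset.card_univ]
    · intro f
      simp only [hR, Finset.sum_eq_zero_iff]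
      constructor
      · intro h x hx
        simp at hx
        rw [hx]
        exact h x.2 (Finset.mem_univ _)
      · intro h j _
        exact h (Fin.last p, j) (by simp)
  have hsC : Nat.card {f : Fin (p + 1) → Fin (q + 1) → ℕ // S f ∧ C f}
      = (a + (p + 1) * q - 1).choose a := by
    have := card_mat_cond (p + 1) (q + 1) a C (univ ×ˢ (univ.erase (Fin.last q))) ?_
    · rw [this]
      congr 2
      rw [Finset.card_product, Finset.card_erase_of_mem (Finset.mem_univ _)]
      simp [Finset.card_univ]
    · intro f
      simp only [hC, Finset.sum_eq_zero_iff]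
      constructor
      · intro h x hx
        simp at hx
        rw [hx]
        exact h x.1 (Finset.mem_univ _)
      · intro h i _
        exact h (i, Fin.last q) (by simp)
  have hsRC : Nat.card {f : Fin (p + 1) → Fin (q + 1) → ℕ // (S f ∧ C f) ∧ R f}
      = (a + p * q - 1).choose a := by
    have heq : Nat.card {f : Fin (p + 1) → Fin (q + 1) → ℕ // (S f ∧ C f) ∧ R f}
        = Nat.card {f : Fin (p + 1) → Fin (q + 1) → ℕ // S f ∧ (R f ∧ C f)} :=
      Nat.card_congr (Equiv.subtypeEquivRight (fun f => by tauto))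
    rw [heq]
    have := card_mat_cond (p + 1) (q + 1) a (fun f => R f ∧ C f)
      ((univ.erase (Fin.last p)) ×ˢ (univ.erase (Fin.last q))) ?_
    · rw [this]
      congr 2
      rw [Finset.card_product, Finset.card_erase_of_mem (Finset.mem_univ _),
        Finset.card_erase_of_mem (Finset.mem_univ _)]
      simp [Finset.card_univ]
    · intro f
      simp only [hR, hC, Finset.sum_eq_zero_iff]
      constructor
      · intro h x hx
        simp at hx
        by_cases h1 : x.1 = Fin.last p
        · rw [h1]; exact h.1 x.2 (Finset.mem_univ _)
        · rw [hx h1]; exact h.2 x.1 (Finset.mem_univ _)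
      · intro h
        constructor
        · intro j _; exact h (Fin.last p, j) (by simp)
        · intro i _; exact h (i, Fin.last q) (by simp)
  -- the cross term appearing in e2 equals the one in e3
  have hcross : Nat.card {f : Fin (p + 1) → Fin (q + 1) → ℕ // (S f ∧ ¬ R f) ∧ C f}
      = Nat.card {f : Fin (p + 1) → Fin (q + 1) → ℕ // (S f ∧ C f) ∧ ¬ R f} :=
    Nat.card_congr (Equiv.subtypeEquivRight (fun f => by tauto))
  -- the target subtype
  have htgt : Nat.card {f : Fin (p + 1) → Fin (q + 1) → ℕ //
        (∑ i, ∑ j, f i j = a) ∧ 0 < (∑ j, f (Fin.last p) j) ∧ 0 < (∑ i, f i (Fin.last q))}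
      = Nat.card {f : Fin (p + 1) → Fin (q + 1) → ℕ // (S f ∧ ¬ R f) ∧ ¬ C f} :=
    Nat.card_congr (Equiv.subtypeEquivRight (fun f => by
      simp only [hS, hR, hC, Nat.pos_iff_ne_zero]
      tauto))
  rw [htgt]
  rw [hfull] at e1
  rw [hsR] at e1
  rw [hsC] at e3
  rw [hsRC] at e3
  rw [hcross] at e2
  zify at e1 e2 e3
  linarith

private def PosT (p q a : ℕ) : Type :=
  {f : Fin (p + 1) → Fin (q + 1) → ℕ //
    (∑ i, ∑ j, f i j = a) ∧ 0 < (∑ j, f (Fin.last p) j) ∧ 0 < (∑ i, f i (Fin.last q))}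

private def NegT (p q b : ℕ) : Type :=
  {f : Fin p → Fin q → ℕ // ∑ i, ∑ j, f i j = b}

private def extFun {p q : ℕ} (N : Fin p → Fin q → ℕ) : Fin (p + 1) → Fin (q + 1) → ℕ :=
  fun i j => if h : i.1 < p ∧ j.1 < q then N ⟨i.1, h.1⟩ ⟨j.1, h.2⟩ else 0

private lemma ext_castSucc {p q : ℕ} (N : Fin p → Fin q → ℕ) (i : Fin p) (j : Fin q) :
    extFun N i.castSucc j.castSucc = N i j := by
  rw [extFun, dif_pos ⟨i.2, j.2⟩]
  simp

private lemma ext_lastrow {p q : ℕ} (N : Fin p → Fin q → ℕ) (j : Fin (q + 1)) :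
    extFun N (Fin.last p) j = 0 := by
  rw [extFun, dif_neg]
  simp [Fin.last]

private lemma ext_lastcol {p q : ℕ} (N : Fin p → Fin q → ℕ) (i : Fin (p + 1)) :
    extFun N i (Fin.last q) = 0 := by
  rw [extFun, dif_neg]
  simp [Fin.last]

private lemma sum_split {p q : ℕ} (g : Fin (p + 1) → Fin (q + 1) → ℕ)
    (hrow : ∀ j, g (Fin.last p) j = 0) (hcol : ∀ i, g i (Fin.last q) = 0) :
    ∑ i, ∑ j, g i j = ∑ i : Fin p, ∑ j : Fin q, g i.castSucc j.castSucc := by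
  rw [Fin.sum_univ_castSucc (f := fun i : Fin (p + 1) => ∑ j, g i j)]
  simp only [hrow, Finset.sum_const_zero, add_zero]
  refine Finset.sum_congr rfl fun i _ => ?_
  rw [Fin.sum_univ_castSucc (f := fun j : Fin (q + 1) => g i.castSucc j)]
  simp [hcol]

private lemma sum_ext {p q : ℕ} (N : Fin p → Fin q → ℕ) :
    ∑ i, ∑ j, extFun N i j = ∑ i, ∑ j, N i j := by
  rw [sum_split (extFun N) (ext_lastrow N) (ext_lastcol N)]
  exact Finset.sum_congr rfl fun i _ => Finset.sum_congr rfl fun j _ => ext_castSucc N i j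

private lemma sigma_mk_eq {n p q : ℕ} {a b : Fin (n + 1)}
    (h : a = b) {x : PosT p q a.1 × NegT p q (n - a.1)} {y : PosT p q b.1 × NegT p q (n - b.1)}
    (h1 : x.1.1 = y.1.1) (h2 : x.2.1 = y.2.1) :
    (⟨a, x⟩ : Σ c : Fin (n + 1), PosT p q c.1 × NegT p q (n - c.1)) = ⟨b, y⟩ := by
  subst h
  obtain ⟨⟨x1, hx1⟩, ⟨x2, hx2⟩⟩ := x
  obtain ⟨⟨y1, hy1⟩, ⟨y2, hy2⟩⟩ := y
  simp only at h1 h2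
  subst h1; subst h2
  rfl

private def bigEquiv (n p q : ℕ) :
    {A : Matrix (Fin (p + 1)) (Fin (q + 1)) (ℕ × ℕ) // A ∈ GSCM11 n p q} ≃
      (Σ a : Fin (n + 1), PosT p q a.1 × NegT p q (n - a.1)) where
  toFun A :=
    ⟨⟨∑ i, ∑ j, (A.1 i j).1, by
        obtain ⟨h1, h2, h3, h4, h5⟩ := A.2
        have hd : ∑ i, ∑ j, ((A.1 i j).1 + (A.1 i j).2)
            = (∑ i, ∑ j, (A.1 i j).1) + (∑ i, ∑ j, (A.1 i j).2) := by
          simp [Finset.sum_add_distrib]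
        have hsum : (∑ i, ∑ j, (A.1 i j).1) + (∑ i, ∑ j, (A.1 i j).2) = n := by
          rw [← hd]; exact h1
        omega⟩,
      ⟨fun i j => (A.1 i j).1, ⟨rfl, A.2.2.2.2.1, A.2.2.2.2.2⟩⟩,
      ⟨fun i j => (A.1 i.castSucc j.castSucc).2, by
        obtain ⟨h1, h2, h3, h4, h5⟩ := A.2
        have hd : ∑ i, ∑ j, ((A.1 i j).1 + (A.1 i j).2)
            = (∑ i, ∑ j, (A.1 i j).1) + (∑ i, ∑ j, (A.1 i j).2) := by
          simp [Finset.sum_add_distrib]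
        have hsum : (∑ i, ∑ j, (A.1 i j).1) + (∑ i, ∑ j, (A.1 i j).2) = n := by
          rw [← hd]; exact h1
        have hneg : ∑ i, ∑ j, (A.1 i j).2
            = ∑ i : Fin p, ∑ j : Fin q, (A.1 i.castSucc j.castSucc).2 :=
          sum_split (fun i j => (A.1 i j).2) h2 h3
        simp only
        omega⟩⟩
  invFun x :=
    ⟨fun i j => (x.2.1.1 i j, extFun x.2.2.1 i j), by
      obtain ⟨⟨a, ha⟩, ⟨P, hP⟩, ⟨N, hN⟩⟩ := x
      refine ⟨?_, fun j => ext_lastrow N j, fun i => ext_lastcol N i, hP.2.1, hP.2.2⟩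
      have he := sum_ext N
      have h1 := hP.1
      have h2 := hN
      simp only [Finset.sum_add_distrib]
      simp only at he h1 h2 ⊢
      omega⟩
  left_inv A := by
    ext i j
    · rfl
    · show extFun (fun i j => (A.1 i.castSucc j.castSucc).2) i j = (A.1 i j).2
      by_cases h : i.1 < p ∧ j.1 < q
      · rw [extFun, dif_pos h]
        have e1 : (Fin.castSucc ⟨i.1, h.1⟩ : Fin (p + 1)) = i := by
          ext; simp
        have e2 : (Fin.castSucc ⟨j.1, h.2⟩ : Fin (q + 1)) = j := by
          ext; simp
        rw [e1, e2]
      · rw [extFun, dif_neg h]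
        rcases (by omega : i.1 = p ∨ j.1 = q) with hi | hj
        · have : i = Fin.last p := by ext; simpa [Fin.last] using hi
          rw [this, A.2.2.1 j]
        · have : j = Fin.last q := by ext; simpa [Fin.last] using hj
          rw [this, A.2.2.2.1 i]
  right_inv x := by
    obtain ⟨⟨a, ha⟩, ⟨P, hP⟩, ⟨N, hN⟩⟩ := x
    refine sigma_mk_eq ?_ ?_ ?_
    · ext
      exact hP.1
    · rfl
    · funext i j
      exact ext_castSucc N i j

private lemma card_negT (p q b : ℕ) :
    Nat.card (NegT p q b) = (b + p * q - 1).choose b := card_mat p q b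

private lemma card_posT (p q a : ℕ) :
    (Nat.card (PosT p q a) : ℤ)
      = ((a + (p + 1) * (q + 1) - 1).choose a : ℤ) - ((a + p * (q + 1) - 1).choose a : ℤ)
        - ((a + (p + 1) * q - 1).choose a : ℤ) + ((a + p * q - 1).choose a : ℤ) :=
  card_pos p q a

private lemma card_GSCM11_sum (n p q : ℕ) :
    Nat.card (GSCM11 n p q) = ∑ a ∈ Finset.range (n + 1),
      Nat.card (PosT p q a) * Nat.card (NegT p q (n - a)) := by
  classical
  haveI hfin : ∀ a : Fin (n + 1), Fintype (PosT p q a.1 × NegT p q (n - a.1)) := by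
    intro a
    haveI h1 : Finite (PosT p q a.1) := aux_finite_mat _ _ (fun f h => h.1)
    haveI h2 : Finite (NegT p q (n - a.1)) := aux_finite_mat _ _ (fun f h => h)
    exact Fintype.ofFinite _
  calc Nat.card (GSCM11 n p q)
      = Nat.card (Σ a : Fin (n + 1), PosT p q a.1 × NegT p q (n - a.1)) :=
        Nat.card_congr (bigEquiv n p q)
    _ = ∑ a : Fin (n + 1), Nat.card (PosT p q a.1 × NegT p q (n - a.1)) := by
        rw [Nat.card_eq_fintype_card, Fintype.card_sigma]
        exact Finset.sum_congr rfl fun a _ => Nat.card_eq_fintype_card.symm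
    _ = ∑ a : Fin (n + 1), Nat.card (PosT p q a.1) * Nat.card (NegT p q (n - a.1)) :=
        Finset.sum_congr rfl fun a _ => Nat.card_prod _ _
    _ = ∑ a ∈ Finset.range (n + 1), Nat.card (PosT p q a) * Nat.card (NegT p q (n - a)) :=
        Fin.sum_univ_eq_sum_range (fun a => Nat.card (PosT p q a) * Nat.card (NegT p q (n - a))) _


end Aux

/-- The cardinality of `GSCM_n^{1,1}(p,q)` equals
`∑_{a=0}^n C(a + (p+1)(q+1) − 1, a) · C(n − a + pq − 1, n − a)
  − ∑_{a=0}^n C(a + p(q+1) − 1, a) · C(n − a + pq − 1, n − a)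
  − ∑_{a=0}^n C(a + (p+1)q − 1, a) · C(n − a + pq − 1, n − a)
  + ∑_{a=0}^n C(a + pq − 1, a) · C(n − a + pq − 1, n − a)`. -/
theorem card_GSCM11 (n p q : ℕ) (hp : 1 ≤ p) (hq : 1 ≤ q) :
    (Nat.card (GSCM11 n p q) : ℤ) =
      (∑ a ∈ Finset.range (n + 1),
        ((a + (p + 1) * (q + 1) - 1).choose a * (n - a + p * q - 1).choose (n - a) : ℤ)) -
      (∑ a ∈ Finset.range (n + 1),
        ((a + p * (q + 1) - 1).choose a * (n - a + p * q - 1).choose (n - a) : ℤ)) -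
      (∑ a ∈ Finset.range (n + 1),
        ((a + (p + 1) * q - 1).choose a * (n - a + p * q - 1).choose (n - a) : ℤ)) +
      (∑ a ∈ Finset.range (n + 1),
        ((a + p * q - 1).choose a * (n - a + p * q - 1).choose (n - a) : ℤ)) := by
  rw [card_GSCM11_sum n p q]
  push_cast
  have hpt : ∀ a ∈ Finset.range (n + 1),
      ((Nat.card (PosT p q a) : ℤ) * (Nat.card (NegT p q (n - a)) : ℤ))
        = (((a + (p + 1) * (q + 1) - 1).choose a : ℤ) - ((a + p * (q + 1) - 1).choose a : ℤ)
            - ((a + (p + 1) * q - 1).choose a : ℤ) + ((a + p * q - 1).choose a : ℤ))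
          * ((n - a + p * q - 1).choose (n - a) : ℤ) := by
    intro a _
    rw [card_posT, card_negT]
  rw [Finset.sum_congr rfl hpt]
  simp only [sub_mul, add_mul]
  rw [Finset.sum_add_distrib, Finset.sum_sub_distrib, Finset.sum_sub_distrib]
end

section
/- For all n ≥ 0 and p, q ≥ 1, |GSCM_n(p,q)| = ∑_{i=0}^p ∑_{j=0}^q C(p,i)·C(q,j)·|SCM_n(i,j)|, where |GSCM_n(p,q)| is the sum of the cardinalities of the four sets GSCM_n^{λ,μ}(p,q) (λ,μ ∈ {0,1}) and SCM_n(i,j) := ⋃_{α,β margin conditions of n of lengths i and j} SCM_n(α,β). -/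
/-- The set of signed contingency matrices with margins `((cα, lα), (cβ, lβ))`: entries are
signed numbers `(a⁺, a⁻)`, row sums of absolute values are prescribed by the composition `cα`,
column sums by `cβ`, and if `lα = true` (resp. `lβ = true`) the entries of the last row
(resp. last column) have vanishing negative part. -/
def SCMset (n : ℕ) (cα : Composition n) (lα : Bool) (cβ : Composition n) (lβ : Bool) :
    Set (Matrix (Fin cα.length) (Fin cβ.length) (ℕ × ℕ)) :=
  {A | (∀ i, ∑ j, ((A i j).1 + (A i j).2) = cα.blocksFun i) ∧
       (∀ j, ∑ i, ((A i j).1 + (A i j).2) = cβ.blocksFun j) ∧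
       (lα = true → ∀ (i : Fin cα.length) (j : Fin cβ.length), (i : ℕ) = cα.length - 1 → (A i j).2 = 0) ∧
       (lβ = true → ∀ (i : Fin cα.length) (j : Fin cβ.length), (j : ℕ) = cβ.length - 1 → (A i j).2 = 0)}

/-- `|SCM_n(i,j)|`: the total number of signed contingency matrices whose margins are margin
conditions of `n` of lengths `i` and `j`.  A margin condition of length `i` is a pair
`(cα, lα)` where `cα` is a composition of `n` of length `i` if `lα = false` and of length
`i + 1` if `lα = true`.  The union over all such margins is disjoint, so its cardinality is
the sum of the individual cardinalities. -/
noncomputable def SCMcard (n i j : ℕ) : ℕ :=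
  ∑ cα : Composition n, ∑ cβ : Composition n, ∑ lα : Bool, ∑ lβ : Bool,
    if cα.length = i + (cond lα 1 0) ∧ cβ.length = j + (cond lβ 1 0) then
      Nat.card (SCMset n cα lα cβ lβ)
    else 0



namespace GSCMaux
open Finset

/-- absolute value of a signed number -/
def ab (x : ℕ × ℕ) : ℕ := x.1 + x.2

@[simp] lemma ab_zero : ab 0 = 0 := rfl

lemma ab_eq_zero {x : ℕ × ℕ} (h : ab x = 0) : x = 0 := by
  cases x; simp [ab] at h ⊢; omega

variable {a b : ℕ}

def rs (A : Matrix (Fin a) (Fin b) (ℕ × ℕ)) (i : Fin a) : ℕ := ∑ j, ab (A i j)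
def cs (A : Matrix (Fin a) (Fin b) (ℕ × ℕ)) (j : Fin b) : ℕ := ∑ i, ab (A i j)
def tot (A : Matrix (Fin a) (Fin b) (ℕ × ℕ)) : ℕ := ∑ i, rs A i

lemma tot_eq_sum_cs (A : Matrix (Fin a) (Fin b) (ℕ × ℕ)) : tot A = ∑ j, cs A j := by
  simp only [tot, rs, cs]; exact Finset.sum_comm

lemma tot_def (A : Matrix (Fin a) (Fin b) (ℕ × ℕ)) :
    tot A = ∑ i, ∑ j, ((A i j).1 + (A i j).2) := rfl

lemma row_zero_of_rs {A : Matrix (Fin a) (Fin b) (ℕ × ℕ)} {i : Fin a} (h : rs A i = 0) :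
    ∀ j, A i j = 0 := by
  intro j
  have := (Finset.sum_eq_zero_iff).1 h j (mem_univ j)
  exact ab_eq_zero this

lemma col_zero_of_cs {A : Matrix (Fin a) (Fin b) (ℕ × ℕ)} {j : Fin b} (h : cs A j = 0) :
    ∀ i, A i j = 0 := by
  intro i
  have := (Finset.sum_eq_zero_iff).1 h i (mem_univ i)
  exact ab_eq_zero this

/-- finiteness of any set of matrices with fixed total -/
lemma finite_of_tot {n : ℕ} (S : Set (Matrix (Fin a) (Fin b) (ℕ × ℕ)))
    (h : ∀ A ∈ S, tot A = n) : S.Finite := by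
  rw [Set.finite_coe_iff.symm]
  have hb : ∀ (A : Matrix (Fin a) (Fin b) (ℕ × ℕ)), A ∈ S → ∀ i j,
      (A i j).1 ≤ n ∧ (A i j).2 ≤ n := by
    intro A hA i j
    have h1 : ab (A i j) ≤ rs A i := Finset.single_le_sum (f := fun j => ab (A i j))
      (fun _ _ => Nat.zero_le _) (mem_univ j)
    have h2 : rs A i ≤ tot A := Finset.single_le_sum (f := fun i => rs A i)
      (fun _ _ => Nat.zero_le _) (mem_univ i)
    have := h A hA
    constructor <;> · simp only [ab] at h1; omega
  refine Finite.of_injective (fun A =>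
    (fun i j => ((⟨(A.1 i j).1, by have := hb A.1 A.2 i j; omega⟩ : Fin (n+1)),
       (⟨(A.1 i j).2, by have := hb A.1 A.2 i j; omega⟩ : Fin (n+1))) :
      Matrix (Fin a) (Fin b) (Fin (n+1) × Fin (n+1)))) ?_
  intro A B hAB
  ext i j
  · have := congrFun (congrFun hAB i) j
    simp only [Prod.ext_iff, Fin.ext_iff] at this
    exact this.1
  · have := congrFun (congrFun hAB i) j
    simp only [Prod.ext_iff, Fin.ext_iff] at this
    exact this.2

/-- fiberwise counting -/
lemma ncard_fiber {α ι : Type*} [Fintype ι] {S : Set α} (hS : S.Finite) (f : α → ι) :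
    Nat.card S = ∑ k : ι, Nat.card {x | x ∈ S ∧ f x = k} := by
  classical
  have key : ∀ k : ι, Nat.card {x | x ∈ S ∧ f x = k}
      = (hS.toFinset.filter fun x => f x = k).card := by
    intro k
    rw [Nat.card_coe_set_eq]
    have : {x | x ∈ S ∧ f x = k} = ↑(hS.toFinset.filter fun x => f x = k) := by
      ext x; simp [Set.Finite.mem_toFinset]
    rw [this, Set.ncard_coe_finset]
  simp_rw [key]
  rw [Nat.card_coe_set_eq,
    show S.ncard = hS.toFinset.card by rw [← Set.ncard_coe_finset hS.toFinset, hS.coe_toFinset]]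
  exact Finset.card_eq_sum_card_fiberwise (t := Finset.univ) (f := f)
    (fun x _ => Finset.mem_univ _)

lemma card_eq_of_invOn {α β : Type*} {S : Set α} {T : Set β} (f : α → β) (g : β → α)
    (hf : Set.MapsTo f S T) (hg : Set.MapsTo g T S)
    (h1 : ∀ x ∈ S, g (f x) = x) (h2 : ∀ y ∈ T, f (g y) = y) :
    Nat.card S = Nat.card T :=
  Nat.card_congr (Set.BijOn.equiv f (Set.InvOn.bijOn ⟨h1, h2⟩ hf hg))

lemma sum_comp_of_support {k m : ℕ} (ρ : Fin k → Fin m) (hρ : Function.Injective ρ)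
    (g : Fin m → ℕ) (h0 : ∀ r, r ∉ Set.range ρ → g r = 0) :
    ∑ x, g (ρ x) = ∑ r, g r := by
  classical
  rw [← Finset.sum_image (g := ρ) (f := g) (by intro x _ y _ h; exact hρ h)]
  refine Finset.sum_subset (Finset.subset_univ _) ?_
  intro r _ hr
  exact h0 r (by simpa using hr)


section Compress
variable {p c : ℕ} (R : Finset (Fin p))

/-- the order embedding of `Fin (R.card + c)` into `Fin (p + c)`: the first `R.card`
coordinates enumerate `R`, the last `c` coordinates map to the last `c` coordinates. -/
def emb (x : Fin (R.card + c)) : Fin (p + c) :=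
  if h : (x : ℕ) < R.card then
    ⟨((R.orderIsoOfFin rfl ⟨(x : ℕ), h⟩ : Fin p) : ℕ),
      by have := ((R.orderIsoOfFin rfl ⟨(x : ℕ), h⟩ : { y // y ∈ R }) : Fin p).isLt; omega⟩
  else ⟨p + ((x : ℕ) - R.card), by have := x.isLt; omega⟩

lemma emb_lt {x : Fin (R.card + c)} (h : (x : ℕ) < R.card) :
    emb R x = ⟨((R.orderIsoOfFin rfl ⟨(x : ℕ), h⟩ : Fin p) : ℕ),
      by have := ((R.orderIsoOfFin rfl ⟨(x : ℕ), h⟩ : { y // y ∈ R }) : Fin p).isLt; omega⟩ := by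
  rw [emb, dif_pos h]

lemma emb_ge {x : Fin (R.card + c)} (h : ¬ (x : ℕ) < R.card) :
    (emb R x : ℕ) = p + ((x : ℕ) - R.card) := by
  rw [emb, dif_neg h]

lemma emb_castLE (x : Fin R.card) :
    emb R (Fin.castLE (Nat.le_add_right _ c) x) =
      Fin.castLE (Nat.le_add_right p c) ((R.orderIsoOfFin rfl x : Fin p)) := by
  have h : ((Fin.castLE (Nat.le_add_right _ c) x : Fin (R.card + c)) : ℕ) < R.card := x.isLt
  rw [emb_lt R h]
  apply Fin.ext
  simp

lemma emb_injective : Function.Injective (emb (c := c) R) := by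
  intro x y hxy
  by_cases hx : (x : ℕ) < R.card <;> by_cases hy : (y : ℕ) < R.card
  · rw [emb_lt R hx, emb_lt R hy] at hxy
    have : (R.orderIsoOfFin rfl ⟨(x : ℕ), hx⟩) = (R.orderIsoOfFin rfl ⟨(y : ℕ), hy⟩) := by
      apply Subtype.ext; apply Fin.ext
      simpa [Fin.ext_iff] using hxy
    have := (R.orderIsoOfFin rfl).injective this
    apply Fin.ext; simpa [Fin.ext_iff] using this
  · rw [emb_lt R hx] at hxy
    have h1 := ((R.orderIsoOfFin rfl ⟨(x : ℕ), hx⟩ : { y // y ∈ R }) : Fin p).isLt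
    have h2 := emb_ge R hy
    rw [← hxy] at h2
    simp only [Fin.ext_iff] at h2 ⊢
    omega
  · rw [emb_lt R hy] at hxy
    have h1 := ((R.orderIsoOfFin rfl ⟨(y : ℕ), hy⟩ : { y // y ∈ R }) : Fin p).isLt
    have h2 := emb_ge R hx
    rw [hxy] at h2
    simp only [Fin.ext_iff] at h2 ⊢
    omega
  · have h1 := emb_ge R hx
    have h2 := emb_ge R hy
    have : (emb R x : ℕ) = emb R y := by rw [hxy]
    apply Fin.ext
    omega

lemma mem_range_emb_of_mem {r : Fin (p + c)} (h1 : (r : ℕ) < p)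
    (h2 : (⟨(r : ℕ), h1⟩ : Fin p) ∈ R) : r ∈ Set.range (emb (c := c) R) := by
  set y := (R.orderIsoOfFin rfl).symm ⟨⟨(r : ℕ), h1⟩, h2⟩ with hy
  refine ⟨⟨(y : ℕ), by have := y.isLt; omega⟩, ?_⟩
  rw [emb_lt R (by exact y.isLt)]
  apply Fin.ext
  have : (R.orderIsoOfFin rfl ⟨(y : ℕ), y.isLt⟩) = ⟨⟨(r : ℕ), h1⟩, h2⟩ := by
    have : (⟨(y : ℕ), y.isLt⟩ : Fin R.card) = y := by apply Fin.ext; rfl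
    rw [this, hy, OrderIso.apply_symm_apply]
  simp [this]

lemma mem_range_emb_of_ge {r : Fin (p + c)} (h1 : p ≤ (r : ℕ)) :
    r ∈ Set.range (emb (c := c) R) := by
  refine ⟨⟨R.card + ((r : ℕ) - p), by have := r.isLt; omega⟩, ?_⟩
  apply Fin.ext
  rw [emb_ge R (by simp)]
  simp
  have := r.isLt
  omega

lemma not_mem_range_emb {r : Fin (p + c)} (h : r ∉ Set.range (emb (c := c) R)) :
    ∃ h1 : (r : ℕ) < p, (⟨(r : ℕ), h1⟩ : Fin p) ∉ R := by
  by_cases h1 : (r : ℕ) < p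
  · refine ⟨h1, fun h2 => h (mem_range_emb_of_mem R h1 h2)⟩
  · exact absurd (mem_range_emb_of_ge R (by omega)) h

variable {γ : Type*}

/-- compress a vector along `emb` -/
def cmp (v : Fin (p + c) → γ) : Fin (R.card + c) → γ := fun x => v (emb R x)

/-- expand a vector along `emb`, filling with zeros -/
def exp [Zero γ] (w : Fin (R.card + c) → γ) : Fin (p + c) → γ := fun r =>
  if h : (r : ℕ) < p then
    (if h2 : (⟨(r : ℕ), h⟩ : Fin p) ∈ R then
      w ⟨((R.orderIsoOfFin rfl).symm ⟨⟨(r : ℕ), h⟩, h2⟩ : Fin R.card),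
        by have := ((R.orderIsoOfFin rfl).symm ⟨⟨(r : ℕ), h⟩, h2⟩).isLt; omega⟩
    else 0)
  else w ⟨R.card + ((r : ℕ) - p), by have := r.isLt; omega⟩

lemma emb_eq_of_lt {x : Fin (R.card + c)} (hx : (x : ℕ) < R.card) :
    emb R x = Fin.castLE (Nat.le_add_right p c) ((R.orderIsoOfFin rfl ⟨(x : ℕ), hx⟩ : Fin p)) := by
  apply Fin.ext
  rw [emb_lt R hx]
  rfl

variable {γ : Type*} [Zero γ]

lemma exp_apply_mem (w : Fin (R.card + c) → γ) {r : Fin (p + c)} (h : (r : ℕ) < p)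
    (h2 : (⟨(r : ℕ), h⟩ : Fin p) ∈ R) :
    exp R w r = w (Fin.castLE (Nat.le_add_right _ c)
      ((R.orderIsoOfFin rfl).symm ⟨⟨(r : ℕ), h⟩, h2⟩)) := by
  rw [exp, dif_pos h, dif_pos h2]
  exact congrArg w (Fin.ext rfl)

lemma exp_apply_notmem (w : Fin (R.card + c) → γ) {r : Fin (p + c)} (h : (r : ℕ) < p)
    (h2 : (⟨(r : ℕ), h⟩ : Fin p) ∉ R) : exp R w r = 0 := by
  rw [exp, dif_pos h, dif_neg h2]

lemma exp_apply_ge (w : Fin (R.card + c) → γ) {r : Fin (p + c)} (h : ¬ (r : ℕ) < p) :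
    exp R w r = w ⟨R.card + ((r : ℕ) - p), by have := r.isLt; omega⟩ := by
  rw [exp, dif_neg h]

lemma cmp_exp (w : Fin (R.card + c) → γ) : cmp R (exp R w) = w := by
  funext x
  by_cases hx : (x : ℕ) < R.card
  · rw [cmp, emb_eq_of_lt R hx]
    set y := (R.orderIsoOfFin rfl ⟨(x : ℕ), hx⟩ : { y // y ∈ R }) with hy
    have h : ((Fin.castLE (Nat.le_add_right p c) (y : Fin p)) : ℕ) < p := (y : Fin p).isLt
    have h2 : (⟨((Fin.castLE (Nat.le_add_right p c) (y : Fin p)) : ℕ), h⟩ : Fin p) ∈ R := y.2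
    rw [exp_apply_mem R w h h2]
    congr 1
    have hsub : (⟨⟨((Fin.castLE (Nat.le_add_right p c) (y : Fin p)) : ℕ), h⟩, h2⟩ :
        { z // z ∈ R }) = y := by
      apply Subtype.ext; apply Fin.ext; rfl
    rw [hsub, hy, OrderIso.symm_apply_apply]
    apply Fin.ext
    rfl
  · rw [cmp, exp_apply_ge R w (by rw [emb_ge R hx]; omega)]
    congr 1
    apply Fin.ext
    show R.card + ((emb R x : ℕ) - p) = (x : ℕ)
    rw [emb_ge R hx]
    have := x.isLt
    omega

lemma exp_cmp (v : Fin (p + c) → γ)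
    (hv : ∀ (r : Fin (p + c)) (h : (r : ℕ) < p), (⟨(r : ℕ), h⟩ : Fin p) ∉ R → v r = 0) :
    exp R (cmp R v) = v := by
  funext r
  by_cases h : (r : ℕ) < p
  · by_cases h2 : (⟨(r : ℕ), h⟩ : Fin p) ∈ R
    · rw [exp_apply_mem R _ h h2, cmp, emb_castLE]
      congr 1
      apply Fin.ext
      show ((R.orderIsoOfFin rfl ((R.orderIsoOfFin rfl).symm ⟨⟨(r : ℕ), h⟩, h2⟩) : Fin p) : ℕ)
        = (r : ℕ)
      rw [OrderIso.apply_symm_apply]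
    · rw [exp_apply_notmem R _ h h2, hv r h h2]
  · rw [exp_apply_ge R _ h, cmp]
    congr 1
    apply Fin.ext
    rw [emb_ge R (by simp)]
    simp
    have := r.isLt
    omega

end Compress


section Del

lemma rs_apply {a b : ℕ} (A : Matrix (Fin a) (Fin b) (ℕ × ℕ)) (i : Fin a) :
    rs A i = ∑ j, ab (A i j) := rfl

lemma rs_row_eq {a a' b : ℕ} {A : Matrix (Fin a) (Fin b) (ℕ × ℕ)}
    {B : Matrix (Fin a') (Fin b) (ℕ × ℕ)} {i : Fin a} {i' : Fin a'} (h : A i = B i') :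
    rs A i = rs B i' := by
  simp only [rs_apply, h]

lemma rowdel {p c b : ℕ} (R : Finset (Fin p))
    (Q : Matrix (Fin (R.card + c)) (Fin b) (ℕ × ℕ) → Prop) :
    Nat.card {A : Matrix (Fin (p + c)) (Fin b) (ℕ × ℕ) |
      (∀ (r : Fin (p + c)) (h : (r : ℕ) < p), (⟨(r : ℕ), h⟩ : Fin p) ∉ R → ∀ j, A r j = 0) ∧
      (∀ (r : Fin (p + c)) (h : (r : ℕ) < p), (⟨(r : ℕ), h⟩ : Fin p) ∈ R → 0 < rs A r) ∧
      Q (cmp R A)} =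
    Nat.card {B : Matrix (Fin (R.card + c)) (Fin b) (ℕ × ℕ) |
      (∀ x : Fin (R.card + c), (x : ℕ) < R.card → 0 < rs B x) ∧ Q B} := by
  refine card_eq_of_invOn (cmp R) (exp R) ?_ ?_ ?_ ?_
  · rintro A ⟨h0, hpos, hQ⟩
    refine ⟨?_, hQ⟩
    intro x hx
    have : rs (cmp R A) x = rs A (emb R x) := rfl
    rw [this, emb_eq_of_lt R hx]
    exact hpos _ ((R.orderIsoOfFin rfl ⟨(x : ℕ), hx⟩ : Fin p)).isLt
      (R.orderIsoOfFin rfl ⟨(x : ℕ), hx⟩).2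
  · rintro B ⟨hpos, hQ⟩
    refine ⟨?_, ?_, ?_⟩
    · intro r h h2 j
      have := exp_apply_notmem R B h h2
      exact congrFun this j
    · intro r h h2
      have he := exp_apply_mem R B h h2
      rw [rs_row_eq he]
      exact hpos _ (((R.orderIsoOfFin rfl).symm ⟨⟨(r : ℕ), h⟩, h2⟩).isLt)
    · exact (congrArg Q (cmp_exp R B)).mpr hQ
  · rintro A ⟨h0, hpos, hQ⟩
    exact exp_cmp R A fun r h h2 => funext (h0 r h h2)
  · rintro B ⟨hpos, hQ⟩
    exact cmp_exp R B

lemma coldel {q c a : ℕ} (C : Finset (Fin q))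
    (Q : Matrix (Fin a) (Fin (C.card + c)) (ℕ × ℕ) → Prop) :
    Nat.card {A : Matrix (Fin a) (Fin (q + c)) (ℕ × ℕ) |
      (∀ (s : Fin (q + c)) (h : (s : ℕ) < q), (⟨(s : ℕ), h⟩ : Fin q) ∉ C → ∀ i, A i s = 0) ∧
      (∀ (s : Fin (q + c)) (h : (s : ℕ) < q), (⟨(s : ℕ), h⟩ : Fin q) ∈ C → 0 < cs A s) ∧
      Q (fun i => cmp C (A i))} =
    Nat.card {B : Matrix (Fin a) (Fin (C.card + c)) (ℕ × ℕ) |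
      (∀ y : Fin (C.card + c), (y : ℕ) < C.card → 0 < cs B y) ∧ Q B} := by
  refine card_eq_of_invOn (fun A i => cmp C (A i)) (fun B i => exp C (B i)) ?_ ?_ ?_ ?_
  · rintro A ⟨h0, hpos, hQ⟩
    refine ⟨?_, hQ⟩
    intro y hy
    have : cs (fun i => cmp C (A i)) y = cs A (emb C y) := rfl
    rw [this, emb_eq_of_lt C hy]
    exact hpos _ ((C.orderIsoOfFin rfl ⟨(y : ℕ), hy⟩ : Fin q)).isLt
      (C.orderIsoOfFin rfl ⟨(y : ℕ), hy⟩).2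
  · rintro B ⟨hpos, hQ⟩
    refine ⟨?_, ?_, ?_⟩
    · intro s h h2 i
      exact exp_apply_notmem C (B i) h h2
    · intro s h h2
      have : cs (fun i => exp C (B i)) s
          = cs B (Fin.castLE (Nat.le_add_right _ c) ((C.orderIsoOfFin rfl).symm ⟨⟨(s:ℕ), h⟩, h2⟩)) := by
        simp only [cs]
        refine Finset.sum_congr rfl fun i _ => ?_
        exact congrArg ab (exp_apply_mem C (B i) h h2)
      rw [this]
      exact hpos _ (((C.orderIsoOfFin rfl).symm ⟨⟨(s : ℕ), h⟩, h2⟩).isLt)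
    · have : (fun i => cmp C (exp C (B i))) = B := funext fun i => cmp_exp C (B i)
      rwa [this]
  · rintro A ⟨h0, hpos, hQ⟩
    funext i
    exact exp_cmp C (A i) fun s h h2 => h0 s h h2 i
  · rintro B ⟨hpos, hQ⟩
    funext i
    exact cmp_exp C (B i)

end Del


section Transfer

variable {p c b : ℕ} (R : Finset (Fin p))

lemma emb_val_eq_last_iff {x : Fin (R.card + c)} (hc : 0 < c) :
    (emb R x : ℕ) = p + c - 1 ↔ (x : ℕ) = R.card + c - 1 := by
  by_cases hx : (x : ℕ) < R.card
  · have h1 := ((R.orderIsoOfFin rfl ⟨(x : ℕ), hx⟩ : { y // y ∈ R }) : Fin p).isLt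
    rw [emb_lt R hx]
    simp only [Fin.ext_iff]
    constructor
    · intro h; omega
    · intro h; omega
  · rw [emb_ge R hx]
    have := x.isLt
    omega

lemma rs_zero_of_row_zero {A : Matrix (Fin b) (Fin c) (ℕ × ℕ)} {i : Fin b}
    (h : ∀ j, A i j = 0) : rs A i = 0 := by
  rw [rs_apply]
  exact Finset.sum_eq_zero fun j _ => by rw [h j]; rfl

lemma cs_zero_of_col_zero {A : Matrix (Fin b) (Fin c) (ℕ × ℕ)} {j : Fin c}
    (h : ∀ i, A i j = 0) : cs A j = 0 := by
  rw [cs]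
  exact Finset.sum_eq_zero fun i _ => by rw [h i]; rfl

variable (A : Matrix (Fin (p + c)) (Fin b) (ℕ × ℕ))
variable (h0 : ∀ (r : Fin (p + c)) (h : (r : ℕ) < p), (⟨(r : ℕ), h⟩ : Fin p) ∉ R →
  ∀ j, A r j = 0)

include h0 in
lemma tot_cmp_row : tot (cmp R A) = tot A := by
  show ∑ x, rs A (emb R x) = ∑ r, rs A r
  refine sum_comp_of_support _ (emb_injective R) _ fun r hr => ?_
  obtain ⟨h1, h2⟩ := not_mem_range_emb R hr
  exact rs_zero_of_row_zero (h0 r h1 h2)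

include h0 in
lemma cs_cmp_row (s : Fin b) : cs (cmp R A) s = cs A s := by
  show ∑ x, ab (A (emb R x) s) = ∑ r, ab (A r s)
  refine sum_comp_of_support (emb R) (emb_injective R) (fun r => ab (A r s)) fun r hr => ?_
  obtain ⟨h1, h2⟩ := not_mem_range_emb R hr
  show ab (A r s) = 0
  rw [h0 r h1 h2 s]; rfl

lemma flag_row_cmp_iff (hc : 0 < c) :
    (∀ (x : Fin (R.card + c)) (y : Fin b), (x : ℕ) = R.card + c - 1 → ((cmp R A) x y).2 = 0)
      ↔ (∀ (i : Fin (p + c)) (y : Fin b), (i : ℕ) = p + c - 1 → (A i y).2 = 0) := by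
  constructor
  · intro h i y hi
    obtain ⟨x, rfl⟩ := mem_range_emb_of_ge R (r := i) (by omega)
    exact h x y ((emb_val_eq_last_iff R hc).1 hi)
  · intro h x y hx
    exact h (emb R x) y ((emb_val_eq_last_iff R hc).2 hx)

lemma flagpos_row_cmp_iff (hc : 0 < c) :
    (∀ x : Fin (R.card + c), (x : ℕ) = R.card + c - 1 → 0 < rs (cmp R A) x)
      ↔ (∀ i : Fin (p + c), (i : ℕ) = p + c - 1 → 0 < rs A i) := by
  constructor
  · intro h i hi
    obtain ⟨x, rfl⟩ := mem_range_emb_of_ge R (r := i) (by omega)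
    exact h x ((emb_val_eq_last_iff R hc).1 hi)
  · intro h x hx
    exact h (emb R x) ((emb_val_eq_last_iff R hc).2 hx)

include h0 in
lemma flag_col_under_row_cmp (m : ℕ) :
    (∀ (x : Fin (R.card + c)) (y : Fin b), (y : ℕ) = m → ((cmp R A) x y).2 = 0)
      ↔ (∀ (i : Fin (p + c)) (y : Fin b), (y : ℕ) = m → (A i y).2 = 0) := by
  constructor
  · intro h i y hy
    by_cases hi : i ∈ Set.range (emb (c := c) R)
    · obtain ⟨x, rfl⟩ := hi
      exact h x y hy
    · obtain ⟨h1, h2⟩ := not_mem_range_emb R hi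
      rw [h0 i h1 h2 y]
      rfl
  · intro h x y hy
    exact h (emb R x) y hy

end Transfer

section TransferCol

variable {a q c : ℕ} (C : Finset (Fin q))
variable (B : Matrix (Fin a) (Fin (q + c)) (ℕ × ℕ))
variable (h0 : ∀ (s : Fin (q + c)) (h : (s : ℕ) < q), (⟨(s : ℕ), h⟩ : Fin q) ∉ C →
  ∀ i, B i s = 0)

include h0 in
lemma tot_cmp_col : tot (fun i => cmp C (B i)) = tot B := by
  rw [tot_eq_sum_cs (fun i => cmp C (B i)), tot_eq_sum_cs B]
  show ∑ y, cs B (emb C y) = ∑ s, cs B s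
  refine sum_comp_of_support _ (emb_injective C) _ fun s hs => ?_
  obtain ⟨h1, h2⟩ := not_mem_range_emb C hs
  exact cs_zero_of_col_zero (h0 s h1 h2)

include h0 in
lemma rs_cmp_col (x : Fin a) : rs (fun i => cmp C (B i)) x = rs B x := by
  show ∑ y, ab (B x (emb C y)) = ∑ s, ab (B x s)
  refine sum_comp_of_support (emb C) (emb_injective C) (fun s => ab (B x s)) fun s hs => ?_
  obtain ⟨h1, h2⟩ := not_mem_range_emb C hs
  show ab (B x s) = 0
  rw [h0 s h1 h2 x]; rfl

lemma flag_col_cmp_iff (hc : 0 < c) :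
    (∀ (x : Fin a) (y : Fin (C.card + c)), (y : ℕ) = C.card + c - 1
        → ((fun i => cmp C (B i)) x y).2 = 0)
      ↔ (∀ (x : Fin a) (s : Fin (q + c)), (s : ℕ) = q + c - 1 → (B x s).2 = 0) := by
  constructor
  · intro h x s hs
    obtain ⟨y, rfl⟩ := mem_range_emb_of_ge C (r := s) (by omega)
    exact h x y ((emb_val_eq_last_iff C hc).1 hs)
  · intro h x y hy
    exact h x (emb C y) ((emb_val_eq_last_iff C hc).2 hy)

lemma flagpos_col_cmp_iff (hc : 0 < c) :
    (∀ y : Fin (C.card + c), (y : ℕ) = C.card + c - 1 → 0 < cs (fun i => cmp C (B i)) y)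
      ↔ (∀ s : Fin (q + c), (s : ℕ) = q + c - 1 → 0 < cs B s) := by
  constructor
  · intro h s hs
    obtain ⟨y, rfl⟩ := mem_range_emb_of_ge C (r := s) (by omega)
    have : cs (fun i => cmp C (B i)) y = cs B (emb C y) := rfl
    rw [← this]
    exact h y ((emb_val_eq_last_iff C hc).1 hs)
  · intro h y hy
    have : cs (fun i => cmp C (B i)) y = cs B (emb C y) := rfl
    rw [this]
    exact h (emb C y) ((emb_val_eq_last_iff C hc).2 hy)

include h0 in
lemma flag_row_under_col_cmp (m : ℕ) :
    (∀ (x : Fin a) (y : Fin (C.card + c)), (x : ℕ) = m → ((fun i => cmp C (B i)) x y).2 = 0)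
      ↔ (∀ (x : Fin a) (s : Fin (q + c)), (x : ℕ) = m → (B x s).2 = 0) := by
  constructor
  · intro h x s hx
    by_cases hs : s ∈ Set.range (emb (c := c) C)
    · obtain ⟨y, rfl⟩ := hs
      exact h x y hx
    · obtain ⟨h1, h2⟩ := not_mem_range_emb C hs
      rw [h0 s h1 h2 x]
      rfl
  · intro h x y hx
    exact h x (emb C y) hx

end TransferCol


/-- all-margins-positive signed contingency matrices -/
def Tset (n a b : ℕ) (lα lβ : Bool) : Set (Matrix (Fin a) (Fin b) (ℕ × ℕ)) :=
  {A | tot A = n ∧ (∀ i, 0 < rs A i) ∧ (∀ j, 0 < cs A j) ∧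
    (lα = true → ∀ (i : Fin a) (j : Fin b), (i : ℕ) = a - 1 → (A i j).2 = 0) ∧
    (lβ = true → ∀ (i : Fin a) (j : Fin b), (j : ℕ) = b - 1 → (A i j).2 = 0)}

/-- a uniform version of the four GSCM sets -/
def Gset (n p q cr cc : ℕ) (lα lβ : Bool) :
    Set (Matrix (Fin (p + cr)) (Fin (q + cc)) (ℕ × ℕ)) :=
  {A | tot A = n ∧
    (lα = true → ∀ (i : Fin (p + cr)) (j : Fin (q + cc)),
      (i : ℕ) = p + cr - 1 → (A i j).2 = 0) ∧
    (lβ = true → ∀ (i : Fin (p + cr)) (j : Fin (q + cc)),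
      (j : ℕ) = q + cc - 1 → (A i j).2 = 0) ∧
    (lα = true → ∀ i : Fin (p + cr), (i : ℕ) = p + cr - 1 → 0 < rs A i) ∧
    (lβ = true → ∀ j : Fin (q + cc), (j : ℕ) = q + cc - 1 → 0 < cs A j)}

/-- the set of nonzero inner rows -/
def suppR {p cr b : ℕ} (A : Matrix (Fin (p + cr)) (Fin b) (ℕ × ℕ)) : Finset (Fin p) :=
  Finset.univ.filter fun r => 0 < rs A (Fin.castLE (Nat.le_add_right p cr) r)

def suppC {a q cc : ℕ} (A : Matrix (Fin a) (Fin (q + cc)) (ℕ × ℕ)) : Finset (Fin q) :=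
  Finset.univ.filter fun s => 0 < cs A (Fin.castLE (Nat.le_add_right q cc) s)

lemma suppR_eq_iff {p cr b : ℕ} (A : Matrix (Fin (p + cr)) (Fin b) (ℕ × ℕ))
    (R : Finset (Fin p)) :
    suppR A = R ↔ ∀ r : Fin p, (0 < rs A (Fin.castLE (Nat.le_add_right p cr) r) ↔ r ∈ R) := by
  rw [Finset.ext_iff]
  constructor
  · intro h r; rw [← h r]; simp [suppR]
  · intro h r; rw [← h r]; simp [suppR]

lemma suppC_eq_iff {a q cc : ℕ} (A : Matrix (Fin a) (Fin (q + cc)) (ℕ × ℕ))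
    (C : Finset (Fin q)) :
    suppC A = C ↔ ∀ s : Fin q, (0 < cs A (Fin.castLE (Nat.le_add_right q cc) s) ↔ s ∈ C) := by
  rw [Finset.ext_iff]
  constructor
  · intro h s; rw [← h s]; simp [suppC]
  · intro h s; rw [← h s]; simp [suppC]

lemma key (n p q : ℕ) (lα lβ : Bool) (cr cc : ℕ) (hcr : cr = cond lα 1 0)
    (hcc : cc = cond lβ 1 0) (R : Finset (Fin p)) (C : Finset (Fin q)) :
    Nat.card {A | A ∈ Gset n p q cr cc lα lβ ∧ suppR A = R ∧ suppC A = C} =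
      Nat.card (Tset n (R.card + cr) (C.card + cc) lα lβ) := by
  have hcrpos : lα = true → 0 < cr := fun h => by rw [hcr, h]; exact Nat.one_pos
  have hccpos : lβ = true → 0 < cc := fun h => by rw [hcc, h]; exact Nat.one_pos
  set Q₁ : Matrix (Fin (R.card + cr)) (Fin (q + cc)) (ℕ × ℕ) → Prop := fun B =>
    tot B = n ∧
    (lα = true → ∀ (x : Fin (R.card + cr)) (y : Fin (q + cc)),
      (x : ℕ) = R.card + cr - 1 → (B x y).2 = 0) ∧
    (lβ = true → ∀ (x : Fin (R.card + cr)) (y : Fin (q + cc)),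
      (y : ℕ) = q + cc - 1 → (B x y).2 = 0) ∧
    (lα = true → ∀ x : Fin (R.card + cr), (x : ℕ) = R.card + cr - 1 → 0 < rs B x) ∧
    (lβ = true → ∀ y : Fin (q + cc), (y : ℕ) = q + cc - 1 → 0 < cs B y) ∧
    (∀ s : Fin q, 0 < cs B (Fin.castLE (Nat.le_add_right q cc) s) ↔ s ∈ C) with hQ₁
  set Q₂ : Matrix (Fin (R.card + cr)) (Fin (C.card + cc)) (ℕ × ℕ) → Prop := fun D =>
    tot D = n ∧
    (lα = true → ∀ (x : Fin (R.card + cr)) (y : Fin (C.card + cc)),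
      (x : ℕ) = R.card + cr - 1 → (D x y).2 = 0) ∧
    (lβ = true → ∀ (x : Fin (R.card + cr)) (y : Fin (C.card + cc)),
      (y : ℕ) = C.card + cc - 1 → (D x y).2 = 0) ∧
    (lα = true → ∀ x : Fin (R.card + cr), (x : ℕ) = R.card + cr - 1 → 0 < rs D x) ∧
    (lβ = true → ∀ y : Fin (C.card + cc), (y : ℕ) = C.card + cc - 1 → 0 < cs D y) ∧
    (∀ x : Fin (R.card + cr), (x : ℕ) < R.card → 0 < rs D x) with hQ₂
  have E1 : {A | A ∈ Gset n p q cr cc lα lβ ∧ suppR A = R ∧ suppC A = C} =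
      {A : Matrix (Fin (p + cr)) (Fin (q + cc)) (ℕ × ℕ) |
        (∀ (r : Fin (p + cr)) (h : (r : ℕ) < p), (⟨(r : ℕ), h⟩ : Fin p) ∉ R → ∀ j, A r j = 0) ∧
        (∀ (r : Fin (p + cr)) (h : (r : ℕ) < p), (⟨(r : ℕ), h⟩ : Fin p) ∈ R → 0 < rs A r) ∧
        Q₁ (cmp R A)} := by
    ext A
    simp only [Set.mem_setOf_eq, Gset, suppR_eq_iff, suppC_eq_iff, hQ₁]
    constructor
    · rintro ⟨⟨htot, hfα, hfβ, hpα, hpβ⟩, hsR, hsC⟩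
      have h0 : ∀ (r : Fin (p + cr)) (h : (r : ℕ) < p), (⟨(r : ℕ), h⟩ : Fin p) ∉ R →
          ∀ j, A r j = 0 := by
        intro r h hr j
        have h1 : ¬ 0 < rs A (Fin.castLE (Nat.le_add_right p cr) ⟨(r : ℕ), h⟩) :=
          fun hpos => hr ((hsR ⟨(r : ℕ), h⟩).1 hpos)
        rw [show (Fin.castLE (Nat.le_add_right p cr) ⟨(r : ℕ), h⟩) = r from Fin.ext rfl] at h1
        exact row_zero_of_rs (by omega) j
      refine ⟨h0, ?_, ?_, ?_, ?_, ?_, ?_, ?_⟩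
      · intro r h hr
        exact (hsR ⟨(r : ℕ), h⟩).2 hr
      · rw [tot_cmp_row R A h0]; exact htot
      · intro hlα
        exact (flag_row_cmp_iff R A (hcrpos hlα)).2 (hfα hlα)
      · intro hlβ
        exact (flag_col_under_row_cmp R A h0 (q + cc - 1)).2 (hfβ hlβ)
      · intro hlα
        exact (flagpos_row_cmp_iff R A (hcrpos hlα)).2 (hpα hlα)
      · intro hlβ y hy
        rw [cs_cmp_row R A h0]
        exact hpβ hlβ y hy
      · intro s
        rw [cs_cmp_row R A h0]
        exact hsC s
    · rintro ⟨h0, hpos, htot, hfα, hfβ, hpα, hpβ, hsC⟩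
      refine ⟨⟨?_, ?_, ?_, ?_, ?_⟩, ?_, ?_⟩
      · rw [← tot_cmp_row R A h0]; exact htot
      · intro hlα
        exact (flag_row_cmp_iff R A (hcrpos hlα)).1 (hfα hlα)
      · intro hlβ
        exact (flag_col_under_row_cmp R A h0 (q + cc - 1)).1 (hfβ hlβ)
      · intro hlα
        exact (flagpos_row_cmp_iff R A (hcrpos hlα)).1 (hpα hlα)
      · intro hlβ y hy
        rw [← cs_cmp_row R A h0]
        exact hpβ hlβ y hy
      · intro r
        constructor
        · intro hp
          by_contra hr
          have := rs_zero_of_row_zero (h0 (Fin.castLE (Nat.le_add_right p cr) r) r.isLt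
            (by simpa using hr))
          omega
        · intro hr
          exact hpos (Fin.castLE (Nat.le_add_right p cr) r) r.isLt (by simpa using hr)
      · intro s
        rw [← cs_cmp_row R A h0]
        exact hsC s
  rw [E1, rowdel R Q₁]
  have E2 : {B : Matrix (Fin (R.card + cr)) (Fin (q + cc)) (ℕ × ℕ) |
        (∀ x : Fin (R.card + cr), (x : ℕ) < R.card → 0 < rs B x) ∧ Q₁ B} =
      {B : Matrix (Fin (R.card + cr)) (Fin (q + cc)) (ℕ × ℕ) |
        (∀ (s : Fin (q + cc)) (h : (s : ℕ) < q), (⟨(s : ℕ), h⟩ : Fin q) ∉ C → ∀ i, B i s = 0) ∧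
        (∀ (s : Fin (q + cc)) (h : (s : ℕ) < q), (⟨(s : ℕ), h⟩ : Fin q) ∈ C → 0 < cs B s) ∧
        Q₂ (fun i => cmp C (B i))} := by
    ext B
    simp only [Set.mem_setOf_eq, hQ₁, hQ₂]
    constructor
    · rintro ⟨hrpos, htot, hfα, hfβ, hpα, hpβ, hsC⟩
      have h0 : ∀ (s : Fin (q + cc)) (h : (s : ℕ) < q), (⟨(s : ℕ), h⟩ : Fin q) ∉ C →
          ∀ i, B i s = 0 := by
        intro s h hs i
        have h1 : ¬ 0 < cs B (Fin.castLE (Nat.le_add_right q cc) ⟨(s : ℕ), h⟩) :=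
          fun hp => hs ((hsC ⟨(s : ℕ), h⟩).1 hp)
        rw [show (Fin.castLE (Nat.le_add_right q cc) ⟨(s : ℕ), h⟩) = s from Fin.ext rfl] at h1
        exact col_zero_of_cs (by omega) i
      refine ⟨h0, ?_, ?_, ?_, ?_, ?_, ?_, ?_⟩
      · intro s h hs
        exact (hsC ⟨(s : ℕ), h⟩).2 hs
      · rw [tot_cmp_col C B h0]; exact htot
      · intro hlα
        exact (flag_row_under_col_cmp C B h0 (R.card + cr - 1)).2 (hfα hlα)
      · intro hlβ
        exact (flag_col_cmp_iff C B (hccpos hlβ)).2 (hfβ hlβ)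
      · intro hlα x hx
        rw [rs_cmp_col C B h0]
        exact hpα hlα x hx
      · intro hlβ
        exact (flagpos_col_cmp_iff C B (hccpos hlβ)).2 (hpβ hlβ)
      · intro x hx
        rw [rs_cmp_col C B h0]
        exact hrpos x hx
    · rintro ⟨h0, hcpos, htot, hfα, hfβ, hpα, hpβ, hrpos⟩
      refine ⟨?_, ?_, ?_, ?_, ?_, ?_, ?_⟩
      · intro x hx
        rw [← rs_cmp_col C B h0]
        exact hrpos x hx
      · rw [← tot_cmp_col C B h0]; exact htot
      · intro hlα
        exact (flag_row_under_col_cmp C B h0 (R.card + cr - 1)).1 (hfα hlα)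
      · intro hlβ
        exact (flag_col_cmp_iff C B (hccpos hlβ)).1 (hfβ hlβ)
      · intro hlα x hx
        rw [← rs_cmp_col C B h0]
        exact hpα hlα x hx
      · intro hlβ
        exact (flagpos_col_cmp_iff C B (hccpos hlβ)).1 (hpβ hlβ)
      · intro s
        constructor
        · intro hp
          by_contra hs
          have := cs_zero_of_col_zero (h0 (Fin.castLE (Nat.le_add_right q cc) s) s.isLt
            (by simpa using hs))
          omega
        · intro hs
          exact hcpos (Fin.castLE (Nat.le_add_right q cc) s) s.isLt (by simpa using hs)
  rw [E2, coldel C Q₂]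
  have E3 : {D : Matrix (Fin (R.card + cr)) (Fin (C.card + cc)) (ℕ × ℕ) |
        (∀ y : Fin (C.card + cc), (y : ℕ) < C.card → 0 < cs D y) ∧ Q₂ D} =
      Tset n (R.card + cr) (C.card + cc) lα lβ := by
    ext D
    simp only [Set.mem_setOf_eq, hQ₂, Tset]
    constructor
    · rintro ⟨hcpos, htot, hfα, hfβ, hpα, hpβ, hrpos⟩
      refine ⟨htot, ?_, ?_, hfα, hfβ⟩
      · intro x
        by_cases hx : (x : ℕ) < R.card
        · exact hrpos x hx
        · have hx2 := x.isLt
          have hcr1 : 0 < cr := by omega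
          have hlα : lα = true := by
            rw [hcr] at hcr1
            cases lα
            · simp at hcr1
            · rfl
          have hcr2 : cr = 1 := by rw [hcr, hlα]; rfl
          exact hpα hlα x (by omega)
      · intro y
        by_cases hy : (y : ℕ) < C.card
        · exact hcpos y hy
        · have hy2 := y.isLt
          have hcc1 : 0 < cc := by omega
          have hlβ : lβ = true := by
            rw [hcc] at hcc1
            cases lβ
            · simp at hcc1
            · rfl
          have hcc2 : cc = 1 := by rw [hcc, hlβ]; rfl
          exact hpβ hlβ y (by omega)
    · rintro ⟨htot, hrpos, hcpos, hfα, hfβ⟩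
      exact ⟨fun y _ => hcpos y, htot, hfα, hfβ, fun _ x _ => hrpos x,
        fun _ y _ => hcpos y, fun x _ => hrpos x⟩
  rw [E3]


lemma sum_finset_card {m : ℕ} {M : Type*} [AddCommMonoid M] (g : ℕ → M) :
    ∑ R : Finset (Fin m), g R.card = ∑ i ∈ Finset.range (m + 1), m.choose i • g i := by
  classical
  rw [← Finset.powerset_univ, Finset.sum_powerset]
  simp only [Finset.card_univ, Fintype.card_fin]
  refine Finset.sum_congr rfl fun i _ => ?_
  rw [show ∑ t ∈ Finset.powersetCard i (Finset.univ : Finset (Fin m)), g t.card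
      = ∑ t ∈ Finset.powersetCard i (Finset.univ : Finset (Fin m)), g i from
    Finset.sum_congr rfl fun t ht => by rw [(Finset.mem_powersetCard.1 ht).2]]
  rw [Finset.sum_const, Finset.card_powersetCard, Finset.card_univ, Fintype.card_fin]

lemma master (n p q : ℕ) (lα lβ : Bool) :
    Nat.card (Gset n p q (cond lα 1 0) (cond lβ 1 0) lα lβ) =
      ∑ i ∈ Finset.range (p + 1), ∑ j ∈ Finset.range (q + 1),
        p.choose i * q.choose j *
          Nat.card (Tset n (i + cond lα 1 0) (j + cond lβ 1 0) lα lβ) := by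
  classical
  have hfin : (Gset n p q (cond lα 1 0) (cond lβ 1 0) lα lβ).Finite :=
    finite_of_tot _ fun A hA => hA.1
  rw [ncard_fiber hfin (fun A => (suppR A, suppC A))]
  rw [Fintype.sum_prod_type]
  have hk : ∀ (R : Finset (Fin p)) (C : Finset (Fin q)),
      Nat.card {A | A ∈ Gset n p q (cond lα 1 0) (cond lβ 1 0) lα lβ
        ∧ (suppR A, suppC A) = (R, C)} =
      Nat.card (Tset n (R.card + cond lα 1 0) (C.card + cond lβ 1 0) lα lβ) := by
    intro R C
    rw [show {A | A ∈ Gset n p q (cond lα 1 0) (cond lβ 1 0) lα lβ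
        ∧ (suppR A, suppC A) = (R, C)} =
      {A | A ∈ Gset n p q (cond lα 1 0) (cond lβ 1 0) lα lβ
        ∧ suppR A = R ∧ suppC A = C} from by
      ext A; simp [Prod.ext_iff, and_assoc]]
    exact key n p q lα lβ _ _ rfl rfl R C
  simp_rw [hk]
  rw [show (∑ R : Finset (Fin p), ∑ C : Finset (Fin q),
      Nat.card (Tset n (R.card + cond lα 1 0) (C.card + cond lβ 1 0) lα lβ))
    = ∑ R : Finset (Fin p), ∑ j ∈ Finset.range (q + 1),
        q.choose j • Nat.card (Tset n (R.card + cond lα 1 0) (j + cond lβ 1 0) lα lβ) from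
    Finset.sum_congr rfl fun R _ => sum_finset_card
      (g := fun j => Nat.card (Tset n (R.card + cond lα 1 0) (j + cond lβ 1 0) lα lβ))]
  rw [sum_finset_card (g := fun i => ∑ j ∈ Finset.range (q + 1),
      q.choose j • Nat.card (Tset n (i + cond lα 1 0) (j + cond lβ 1 0) lα lβ))]
  refine Finset.sum_congr rfl fun i _ => ?_
  rw [Finset.smul_sum]
  refine Finset.sum_congr rfl fun j _ => ?_
  simp [smul_eq_mul, mul_assoc]


section Step1

/-- the composition associated to a margin vector -/
def mkComp (n : ℕ) {k : ℕ} (v : Fin k → ℕ) : Composition n :=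
  if h : (∀ x ∈ List.ofFn v, 0 < x) ∧ (List.ofFn v).sum = n then
    ⟨List.ofFn v, fun hx => h.1 _ hx, h.2⟩
  else Composition.ones n

lemma mkComp_blocks (n : ℕ) {k : ℕ} (v : Fin k → ℕ) (h1 : ∀ i, 0 < v i)
    (h2 : ∑ i, v i = n) : (mkComp n v).blocks = List.ofFn v := by
  rw [mkComp, dif_pos ⟨List.forall_mem_ofFn_iff.2 h1, by rw [List.sum_ofFn]; exact h2⟩]

lemma mkComp_length (n : ℕ) {k : ℕ} (v : Fin k → ℕ) (h1 : ∀ i, 0 < v i)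
    (h2 : ∑ i, v i = n) : (mkComp n v).length = k := by
  rw [Composition.length, mkComp_blocks n v h1 h2, List.length_ofFn]

lemma mkComp_eq_iff (n : ℕ) {k : ℕ} (v : Fin k → ℕ) (h1 : ∀ i, 0 < v i)
    (h2 : ∑ i, v i = n) (c : Composition n) (hk : c.length = k) :
    mkComp n v = c ↔ List.ofFn v = c.blocks := by
  constructor
  · intro h
    rw [← h, mkComp_blocks n v h1 h2]
  · intro h
    apply Composition.ext
    rw [mkComp_blocks n v h1 h2, h]


lemma scm_step (n a b : ℕ) (lα lβ : Bool) :
    (∑ cα : Composition n, ∑ cβ : Composition n,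
      if cα.length = a ∧ cβ.length = b then Nat.card (SCMset n cα lα cβ lβ) else 0)
    = Nat.card (Tset n a b lα lβ) := by
  classical
  have hfin : (Tset n a b lα lβ).Finite := finite_of_tot _ fun A hA => hA.1
  rw [ncard_fiber hfin (fun A => (mkComp n (rs A), mkComp n (cs A))), Fintype.sum_prod_type]
  refine Finset.sum_congr rfl fun cα _ => Finset.sum_congr rfl fun cβ _ => ?_
  by_cases h : cα.length = a ∧ cβ.length = b
  · rw [if_pos h]
    obtain ⟨h1, h2⟩ := h
    subst h1 h2
    have hset : {A | A ∈ Tset n cα.length cβ.length lα lβ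
        ∧ (mkComp n (rs A), mkComp n (cs A)) = (cα, cβ)} = SCMset n cα lα cβ lβ := by
      ext A
      simp only [Set.mem_setOf_eq, SCMset, Tset, Prod.ext_iff]
      constructor
      · rintro ⟨⟨htot, hrpos, hcpos, hfα, hfβ⟩, hf1, hf2⟩
        have htot' : ∑ j, cs A j = n := by rw [← tot_eq_sum_cs]; exact htot
        have hr : List.ofFn (rs A) = cα.blocks :=
          (mkComp_eq_iff n (rs A) hrpos htot cα rfl).1 hf1
        have hc : List.ofFn (cs A) = cβ.blocks :=
          (mkComp_eq_iff n (cs A) hcpos htot' cβ rfl).1 hf2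
        have hrsA : rs A = cα.blocksFun :=
          List.ofFn_inj.1 (hr.trans (Composition.ofFn_blocksFun cα).symm)
        have hcsA : cs A = cβ.blocksFun :=
          List.ofFn_inj.1 (hc.trans (Composition.ofFn_blocksFun cβ).symm)
        exact ⟨fun i => congrFun hrsA i, fun j => congrFun hcsA j, hfα, hfβ⟩
      · rintro ⟨hr, hc, hfα, hfβ⟩
        have hrsA : rs A = cα.blocksFun := funext hr
        have hcsA : cs A = cβ.blocksFun := funext hc
        have htot : tot A = n := by
          rw [tot]
          simp only [hrsA]
          exact cα.sum_blocksFun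
        have hrpos : ∀ i, 0 < rs A i := fun i => by
          rw [hrsA]; exact cα.blocks_pos (cα.blocksFun_mem_blocks i)
        have hcpos : ∀ j, 0 < cs A j := fun j => by
          rw [hcsA]; exact cβ.blocks_pos (cβ.blocksFun_mem_blocks j)
        refine ⟨⟨htot, hrpos, hcpos, hfα, hfβ⟩, ?_, ?_⟩
        · rw [mkComp_eq_iff n (rs A) hrpos htot cα rfl]
          rw [hrsA, Composition.ofFn_blocksFun]
        · have htot' : ∑ j, cs A j = n := by rw [← tot_eq_sum_cs]; exact htot
          rw [mkComp_eq_iff n (cs A) hcpos htot' cβ rfl]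
          rw [hcsA, Composition.ofFn_blocksFun]
    rw [hset]
  · rw [if_neg h]
    have he : {A | A ∈ Tset n a b lα lβ ∧ (mkComp n (rs A), mkComp n (cs A)) = (cα, cβ)}
        = (∅ : Set (Matrix (Fin a) (Fin b) (ℕ × ℕ))) := by
      ext A
      simp only [Set.mem_setOf_eq, Set.mem_empty_iff_false, iff_false]
      rintro ⟨⟨htot, hrpos, hcpos, -, -⟩, hf⟩
      have hf1 : mkComp n (rs A) = cα := congrArg Prod.fst hf
      have hf2 : mkComp n (cs A) = cβ := congrArg Prod.snd hf
      have htot' : ∑ j, cs A j = n := by rw [← tot_eq_sum_cs]; exact htot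
      have l1 : cα.length = a := by
        rw [← hf1]; exact mkComp_length n (rs A) hrpos htot
      have l2 : cβ.length = b := by
        rw [← hf2]; exact mkComp_length n (cs A) hcpos htot'
      exact h ⟨l1, l2⟩
    rw [he]
    simp [Nat.card_coe_set_eq]

lemma scmcard_eq (n i j : ℕ) :
    SCMcard n i j =
      Nat.card (Tset n (i + 1) (j + 1) true true) + Nat.card (Tset n (i + 1) j true false) +
      (Nat.card (Tset n i (j + 1) false true) + Nat.card (Tset n i j false false)) := by
  rw [SCMcard]
  simp only [Fintype.sum_bool, Bool.cond_true, Bool.cond_false, Nat.add_zero]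
  simp only [Finset.sum_add_distrib]
  rw [scm_step n (i + 1) (j + 1) true true, scm_step n (i + 1) j true false,
    scm_step n i (j + 1) false true, scm_step n i j false false]

end Step1

end GSCMaux
namespace GSCMaux

lemma ab_eq_fst {x : ℕ × ℕ} (h : x.2 = 0) : ab x = x.1 := by
  unfold ab; omega

lemma fin_last_eq {p : ℕ} (i : Fin (p + 1)) (h : (i : ℕ) = p + 1 - 1) : i = Fin.last p :=
  Fin.ext (by simpa using h)

lemma fin_last_val {p : ℕ} : ((Fin.last p : Fin (p + 1)) : ℕ) = p + 1 - 1 := by simp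

lemma g00 (n p q : ℕ) : GSCM00 n p q = Gset n p q 0 0 false false := by
  ext A
  constructor
  · intro htot
    exact ⟨htot, fun h => absurd h Bool.false_ne_true, fun h => absurd h Bool.false_ne_true,
      fun h => absurd h Bool.false_ne_true, fun h => absurd h Bool.false_ne_true⟩
  · rintro ⟨htot, -, -, -, -⟩
    exact htot

lemma g10 (n p q : ℕ) : GSCM10 n p q = Gset n p q 1 0 true false := by
  ext A
  constructor
  · rintro ⟨htot, hneg, hpos⟩
    have hsum : rs A (Fin.last p) = ∑ j, (A (Fin.last p) j).1 := by
      rw [rs_apply]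
      exact Finset.sum_congr rfl fun j _ => ab_eq_fst (hneg j)
    refine ⟨htot, fun _ i j hi => ?_, fun h => absurd h Bool.false_ne_true,
      fun _ i hi => ?_, fun h => absurd h Bool.false_ne_true⟩
    · rw [fin_last_eq i hi]; exact hneg j
    · rw [fin_last_eq i hi]; omega
  · rintro ⟨htot, hfα, -, hpα, -⟩
    have hn : ∀ j, (A (Fin.last p) j).2 = 0 := fun j => hfα rfl (Fin.last p) j fin_last_val
    have hsum : rs A (Fin.last p) = ∑ j, (A (Fin.last p) j).1 := by
      rw [rs_apply]
      exact Finset.sum_congr rfl fun j _ => ab_eq_fst (hn j)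
    have hp := hpα rfl (Fin.last p) fin_last_val
    exact ⟨htot, hn, by omega⟩

lemma g01 (n p q : ℕ) : GSCM01 n p q = Gset n p q 0 1 false true := by
  ext A
  constructor
  · rintro ⟨htot, hneg, hpos⟩
    have hsum : cs A (Fin.last q) = ∑ i, (A i (Fin.last q)).1 := by
      rw [cs]
      exact Finset.sum_congr rfl fun i _ => ab_eq_fst (hneg i)
    refine ⟨htot, fun h => absurd h Bool.false_ne_true, fun _ i j hj => ?_,
      fun h => absurd h Bool.false_ne_true, fun _ j hj => ?_⟩
    · rw [fin_last_eq j hj]; exact hneg i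
    · rw [fin_last_eq j hj]; omega
  · rintro ⟨htot, -, hfβ, -, hpβ⟩
    have hn : ∀ i, (A i (Fin.last q)).2 = 0 := fun i => hfβ rfl i (Fin.last q) fin_last_val
    have hsum : cs A (Fin.last q) = ∑ i, (A i (Fin.last q)).1 := by
      rw [cs]
      exact Finset.sum_congr rfl fun i _ => ab_eq_fst (hn i)
    have hp := hpβ rfl (Fin.last q) fin_last_val
    exact ⟨htot, hn, by omega⟩

lemma g11 (n p q : ℕ) : GSCM11 n p q = Gset n p q 1 1 true true := by
  ext A
  constructor
  · rintro ⟨htot, hnegr, hnegc, hposr, hposc⟩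
    have hsumr : rs A (Fin.last p) = ∑ j, (A (Fin.last p) j).1 := by
      rw [rs_apply]
      exact Finset.sum_congr rfl fun j _ => ab_eq_fst (hnegr j)
    have hsumc : cs A (Fin.last q) = ∑ i, (A i (Fin.last q)).1 := by
      rw [cs]
      exact Finset.sum_congr rfl fun i _ => ab_eq_fst (hnegc i)
    refine ⟨htot, fun _ i j hi => ?_, fun _ i j hj => ?_, fun _ i hi => ?_, fun _ j hj => ?_⟩
    · rw [fin_last_eq i hi]; exact hnegr j
    · rw [fin_last_eq j hj]; exact hnegc i
    · rw [fin_last_eq i hi]; omega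
    · rw [fin_last_eq j hj]; omega
  · rintro ⟨htot, hfα, hfβ, hpα, hpβ⟩
    have hnr : ∀ j, (A (Fin.last p) j).2 = 0 := fun j => hfα rfl (Fin.last p) j fin_last_val
    have hnc : ∀ i, (A i (Fin.last q)).2 = 0 := fun i => hfβ rfl i (Fin.last q) fin_last_val
    have hsumr : rs A (Fin.last p) = ∑ j, (A (Fin.last p) j).1 := by
      rw [rs_apply]
      exact Finset.sum_congr rfl fun j _ => ab_eq_fst (hnr j)
    have hsumc : cs A (Fin.last q) = ∑ i, (A i (Fin.last q)).1 := by
      rw [cs]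
      exact Finset.sum_congr rfl fun i _ => ab_eq_fst (hnc i)
    have hp1 := hpα rfl (Fin.last p) fin_last_val
    have hp2 := hpβ rfl (Fin.last q) fin_last_val
    exact ⟨htot, hnr, hnc, by omega, by omega⟩

end GSCMaux

/-- `|GSCM_n(p,q)| = ∑_{i=0}^p ∑_{j=0}^q C(p,i) · C(q,j) · |SCM_n(i,j)|`. -/
theorem card_GSCM_eq_sum_card_SCM (n p q : ℕ) (hp : 1 ≤ p) (hq : 1 ≤ q) :
    GSCMcard n p q =
      ∑ i ∈ Finset.range (p + 1), ∑ j ∈ Finset.range (q + 1),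
        p.choose i * q.choose j * SCMcard n i j := by
  open GSCMaux in
  rw [GSCMcard, g00, g10, g01, g11]
  have m00 := master n p q false false
  have m10 := master n p q true false
  have m01 := master n p q false true
  have m11 := master n p q true true
  simp only [cond_true, cond_false, Nat.add_zero] at m00 m10 m01 m11
  rw [m00, m10, m01, m11]
  rw [← Finset.sum_add_distrib, ← Finset.sum_add_distrib, ← Finset.sum_add_distrib]
  refine Finset.sum_congr rfl fun i _ => ?_
  rw [← Finset.sum_add_distrib, ← Finset.sum_add_distrib, ← Finset.sum_add_distrib]
  refine Finset.sum_congr rfl fun j _ => ?_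
  rw [GSCMaux.scmcard_eq]
  ring
end

section
/- For every n ≥ 1 there exist strictly positive real numbers d(n,0), d(n,1), …, d(n,n) such that for all integers p, q with 0 ≤ p, q ≤ n, |GSCM_n(p,q)| = ∑_{k=0}^n d(n,k)·(p + 1/2)^k·(q + 1/2)^k. Equivalently, the (n+1)×(n+1) matrix L with L_pq = |GSCM_n(p,q)| factors as L = V·D·Vᵀ, where V is the Vandermonde-type matrix V_ij = (i + 1/2)^j (0 ≤ i,j ≤ n) and D is a diagonal matrix with strictly positive diagonal entries. -/
open Finset

lemma card_sumFix (α : Type*) [Fintype α] [DecidableEq α] (n : ℕ) :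
    Nat.card {f : α → ℕ // ∑ a, f a = n} = Nat.multichoose (Fintype.card α) n := by
  rw [Nat.card_congr (Sym.equivNatSumOfFintype α n).symm, Nat.card_eq_fintype_card,
    Sym.card_sym_eq_multichoose]

instance finite_sumFix (α : Type*) [Fintype α] [DecidableEq α] (n : ℕ) :
    Finite {f : α → ℕ // ∑ a, f a = n} :=
  Finite.of_equiv _ (Sym.equivNatSumOfFintype α n)

def zeroOnEquiv (ι : Type*) [Fintype ι] [DecidableEq ι] (Z : Finset ι) (n : ℕ) :
    {f : ι → ℕ // (∑ i, f i = n) ∧ ∀ i ∈ Z, f i = 0}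
      ≃ {g : {i // i ∉ Z} → ℕ // ∑ i, g i = n} where
  toFun f := ⟨fun i => f.1 i.1, by
    obtain ⟨f, hs, hz⟩ := f
    rw [← Finset.sum_subtype (Zᶜ) (fun x => Finset.mem_compl) f]
    rw [Finset.sum_subset (Finset.subset_univ _)
      (fun x _ hx => hz x (by simpa using hx))]
    exact hs⟩
  invFun g := ⟨fun i => if h : i ∈ Z then 0 else g.1 ⟨i, h⟩, by
    constructor
    · rw [← Finset.sum_subset (Finset.subset_univ (Zᶜ))
        (fun x _ hx => by simp [Finset.mem_compl.not.mp hx, dif_pos])]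
      rw [Finset.sum_subtype (Zᶜ) (fun x => Finset.mem_compl)]
      have h2 : ∀ x : {i // i ∉ Z}, (if h : (x:ι) ∈ Z then 0 else g.1 ⟨x, h⟩) = g.1 x :=
        fun x => dif_neg x.2
      simpa [h2] using g.2
    · intro i hi; simp [hi]⟩
  left_inv f := by
    ext i
    by_cases h : i ∈ Z
    · simp [h, f.2.2 i h]
    · simp [h]
  right_inv g := by ext i; simp [i.2]

lemma card_sumFixZero (ι : Type*) [Fintype ι] [DecidableEq ι] (Z : Finset ι) (n : ℕ) :
    Nat.card {f : ι → ℕ // (∑ i, f i = n) ∧ ∀ i ∈ Z, f i = 0}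
      = Nat.multichoose (Fintype.card ι - Z.card) n := by
  rw [Nat.card_congr (zeroOnEquiv ι Z n), card_sumFix]
  congr 1
  rw [Fintype.card_subtype_compl, Fintype.card_coe]

lemma card_split_s9 {ι : Type*} [Fintype ι] [DecidableEq ι] (n : ℕ) (C D : (ι → ℕ) → Prop) :
    Nat.card ({f : ι → ℕ | ((∑ i, f i = n) ∧ C f) ∧ D f} : Set _)
      + Nat.card ({f : ι → ℕ | ((∑ i, f i = n) ∧ C f) ∧ ¬ D f} : Set _)
      = Nat.card ({f : ι → ℕ | (∑ i, f i = n) ∧ C f} : Set _) := by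
  have hfin : {f : ι → ℕ | (∑ i, f i = n)}.Finite := by
    rw [← Set.finite_coe_iff]; exact finite_sumFix ι n
  have h1 : {f : ι → ℕ | ((∑ i, f i = n) ∧ C f) ∧ D f}.Finite :=
    hfin.subset (fun f hf => hf.1.1)
  have h2 : {f : ι → ℕ | ((∑ i, f i = n) ∧ C f) ∧ ¬ D f}.Finite :=
    hfin.subset (fun f hf => hf.1.1)
  have hu : {f : ι → ℕ | (∑ i, f i = n) ∧ C f}
      = {f | ((∑ i, f i = n) ∧ C f) ∧ D f} ∪ {f | ((∑ i, f i = n) ∧ C f) ∧ ¬ D f} := by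
    ext f; by_cases h : D f <;> simp [h] 
  have hd : Disjoint {f : ι → ℕ | ((∑ i, f i = n) ∧ C f) ∧ D f}
      {f : ι → ℕ | ((∑ i, f i = n) ∧ C f) ∧ ¬ D f} := by
    rw [Set.disjoint_left]; rintro f ⟨_, h⟩ ⟨_, h'⟩; exact h' h
  rw [Nat.card_coe_set_eq, Nat.card_coe_set_eq, Nat.card_coe_set_eq, hu,
    Set.ncard_union_eq hd h1 h2]

def matEquiv (r c : ℕ) : Matrix (Fin r) (Fin c) (ℕ × ℕ) ≃ (Fin r × Fin c × Fin 2 → ℕ) where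
  toFun A x := ![(A x.1 x.2.1).1, (A x.1 x.2.1).2] x.2.2
  invFun f i j := (f (i, j, 0), f (i, j, 1))
  left_inv A := by funext i j; simp
  right_inv f := by funext ⟨i, j, s⟩; fin_cases s <;> rfl

lemma sum_matEquiv {r c : ℕ} (A : Matrix (Fin r) (Fin c) (ℕ × ℕ)) :
    ∑ x, matEquiv r c A x = ∑ i, ∑ j, ((A i j).1 + (A i j).2) := by
  rw [Fintype.sum_prod_type]
  refine Finset.sum_congr rfl fun i _ => ?_
  rw [Fintype.sum_prod_type]
  exact Finset.sum_congr rfl fun j _ => by rw [Fin.sum_univ_two]; rfl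

lemma card_zero_set {ι : Type*} [Fintype ι] [DecidableEq ι] (n : ℕ) (S : Set (ι → ℕ))
    (Z : Finset ι) (h : ∀ f : ι → ℕ, f ∈ S ↔ ((∑ i, f i = n) ∧ ∀ i ∈ Z, f i = 0)) :
    Nat.card S = Nat.multichoose (Fintype.card ι - Z.card) n :=
  (Nat.card_congr (Equiv.subtypeEquiv (Equiv.refl _) h)).trans (card_sumFixZero ι Z n)

lemma card00 (n p q : ℕ) : Nat.card (GSCM00 n p q) = Nat.multichoose (2 * p * q) n := by
  have h : Nat.card (GSCM00 n p q)
      = Nat.card ({f : Fin p × Fin q × Fin 2 → ℕ | ∑ i, f i = n} : Set _) :=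
    Nat.card_congr ((matEquiv p q).subtypeEquiv fun A => by
      simp [GSCM00, sum_matEquiv])
  rw [h, card_zero_set n _ (∅ : Finset (Fin p × Fin q × Fin 2)) (fun f => by simp)]
  congr 1
  simp [Fintype.card_prod]
  ring

lemma matEquiv_apply1 {r c : ℕ} (A : Matrix (Fin r) (Fin c) (ℕ × ℕ)) (i : Fin r) (j : Fin c) :
    matEquiv r c A (i, j, 0) = (A i j).1 := rfl

lemma matEquiv_apply2 {r c : ℕ} (A : Matrix (Fin r) (Fin c) (ℕ × ℕ)) (i : Fin r) (j : Fin c) :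
    matEquiv r c A (i, j, 1) = (A i j).2 := rfl

lemma not_pos_sum_iff {α : Type*} [Fintype α] (g : α → ℕ) :
    ¬ (0 < ∑ a, g a) ↔ ∀ a, g a = 0 := by
  rw [Nat.not_lt, Nat.le_zero, Finset.sum_eq_zero_iff]
  simp

lemma card10 (n p q : ℕ) :
    Nat.card (GSCM10 n p q) + Nat.multichoose (2 * p * q) n
      = Nat.multichoose (2 * p * q + q) n := by
  classical
  have h10 : Nat.card (GSCM10 n p q)
      = Nat.card ({f : Fin (p + 1) × Fin q × Fin 2 → ℕ |
          ((∑ i, f i = n) ∧ ∀ j, f (Fin.last p, j, 1) = 0)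
            ∧ 0 < ∑ j, f (Fin.last p, j, 0)} : Set _) :=
    Nat.card_congr ((matEquiv (p+1) q).subtypeEquiv fun A => by
      simp only [GSCM10, Set.mem_setOf_eq, sum_matEquiv, matEquiv_apply1, matEquiv_apply2]
      tauto)
  have hsplit := card_split_s9 n
    (fun f : Fin (p + 1) × Fin q × Fin 2 → ℕ => ∀ j, f (Fin.last p, j, 1) = 0)
    (fun f => 0 < ∑ j, f (Fin.last p, j, 0))
  have htot : Nat.card ({f : Fin (p + 1) × Fin q × Fin 2 → ℕ |
        (∑ i, f i = n) ∧ ∀ j, f (Fin.last p, j, 1) = 0} : Set _)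
      = Nat.multichoose (2 * p * q + q) n := by
    rw [card_zero_set n _
      (Finset.univ.image (fun j : Fin q => ((Fin.last p, j, 1) : Fin (p + 1) × Fin q × Fin 2)))
      (fun f => by
        simp only [Set.mem_setOf_eq, Finset.mem_image, Finset.mem_univ, true_and]
        constructor
        · rintro ⟨hs, hc⟩
          exact ⟨hs, by rintro i ⟨j, rfl⟩; exact hc j⟩
        · rintro ⟨hs, hz⟩
          exact ⟨hs, fun j => hz _ ⟨j, rfl⟩⟩)]
    rw [Finset.card_image_of_injective _ (fun a b h => by
      simpa using congrArg (fun z : Fin (p + 1) × Fin q × Fin 2 => z.2.1) h)]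
    simp only [Fintype.card_prod, Fintype.card_fin, Finset.card_univ]
    congr 1
    exact Nat.sub_eq_of_eq_add (by ring)
  have hzero : Nat.card ({f : Fin (p + 1) × Fin q × Fin 2 → ℕ |
        ((∑ i, f i = n) ∧ ∀ j, f (Fin.last p, j, 1) = 0)
          ∧ ¬ 0 < ∑ j, f (Fin.last p, j, 0)} : Set _)
      = Nat.multichoose (2 * p * q) n := by
    rw [card_zero_set n _
      (Finset.univ.image (fun x : Fin q × Fin 2 =>
        ((Fin.last p, x.1, x.2) : Fin (p + 1) × Fin q × Fin 2)))
      (fun f => by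
        simp only [Set.mem_setOf_eq, Finset.mem_image, Finset.mem_univ, true_and,
          not_pos_sum_iff]
        constructor
        · rintro ⟨⟨hs, hc⟩, hd⟩
          refine ⟨hs, ?_⟩
          rintro i ⟨⟨j, s⟩, rfl⟩
          fin_cases s
          · exact hd j
          · exact hc j
        · rintro ⟨hs, hz⟩
          exact ⟨⟨hs, fun j => hz _ ⟨(j, 1), rfl⟩⟩, fun j => hz _ ⟨(j, 0), rfl⟩⟩)]
    rw [Finset.card_image_of_injective _ (fun a b h => by
      simp only [Prod.mk.injEq] at h
      exact Prod.ext h.2.1 h.2.2)]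
    simp only [Fintype.card_prod, Fintype.card_fin, Finset.card_univ]
    congr 1
    exact Nat.sub_eq_of_eq_add (by ring)
  rw [h10, ← hzero, ← htot, ← hsplit]

lemma card01 (n p q : ℕ) :
    Nat.card (GSCM01 n p q) + Nat.multichoose (2 * p * q) n
      = Nat.multichoose (2 * p * q + p) n := by
  classical
  have h01 : Nat.card (GSCM01 n p q)
      = Nat.card ({f : Fin p × Fin (q + 1) × Fin 2 → ℕ |
          ((∑ i, f i = n) ∧ ∀ i, f (i, Fin.last q, 1) = 0)
            ∧ 0 < ∑ i, f (i, Fin.last q, 0)} : Set _) :=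
    Nat.card_congr ((matEquiv p (q+1)).subtypeEquiv fun A => by
      simp only [GSCM01, Set.mem_setOf_eq, sum_matEquiv, matEquiv_apply1, matEquiv_apply2]
      tauto)
  have hsplit := card_split_s9 n
    (fun f : Fin p × Fin (q + 1) × Fin 2 → ℕ => ∀ i, f (i, Fin.last q, 1) = 0)
    (fun f => 0 < ∑ i, f (i, Fin.last q, 0))
  have htot : Nat.card ({f : Fin p × Fin (q + 1) × Fin 2 → ℕ |
        (∑ i, f i = n) ∧ ∀ i, f (i, Fin.last q, 1) = 0} : Set _)
      = Nat.multichoose (2 * p * q + p) n := by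
    rw [card_zero_set n _
      (Finset.univ.image (fun i : Fin p => ((i, Fin.last q, 1) : Fin p × Fin (q + 1) × Fin 2)))
      (fun f => by
        simp only [Set.mem_setOf_eq, Finset.mem_image, Finset.mem_univ, true_and]
        constructor
        · rintro ⟨hs, hc⟩
          exact ⟨hs, by rintro i ⟨j, rfl⟩; exact hc j⟩
        · rintro ⟨hs, hz⟩
          exact ⟨hs, fun i => hz _ ⟨i, rfl⟩⟩)]
    rw [Finset.card_image_of_injective _ (fun a b h => by
      simpa using congrArg (fun z : Fin p × Fin (q + 1) × Fin 2 => z.1) h)]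
    simp only [Fintype.card_prod, Fintype.card_fin, Finset.card_univ]
    congr 1
    exact Nat.sub_eq_of_eq_add (by ring)
  have hzero : Nat.card ({f : Fin p × Fin (q + 1) × Fin 2 → ℕ |
        ((∑ i, f i = n) ∧ ∀ i, f (i, Fin.last q, 1) = 0)
          ∧ ¬ 0 < ∑ i, f (i, Fin.last q, 0)} : Set _)
      = Nat.multichoose (2 * p * q) n := by
    rw [card_zero_set n _
      (Finset.univ.image (fun x : Fin p × Fin 2 =>
        ((x.1, Fin.last q, x.2) : Fin p × Fin (q + 1) × Fin 2)))
      (fun f => by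
        simp only [Set.mem_setOf_eq, Finset.mem_image, Finset.mem_univ, true_and,
          not_pos_sum_iff]
        constructor
        · rintro ⟨⟨hs, hc⟩, hd⟩
          refine ⟨hs, ?_⟩
          rintro i ⟨⟨j, s⟩, rfl⟩
          fin_cases s
          · exact hd j
          · exact hc j
        · rintro ⟨hs, hz⟩
          exact ⟨⟨hs, fun i => hz _ ⟨(i, 1), rfl⟩⟩, fun i => hz _ ⟨(i, 0), rfl⟩⟩)]
    rw [Finset.card_image_of_injective _ (fun a b h => by
      simp only [Prod.mk.injEq] at h
      exact Prod.ext h.1 h.2.2)]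
    simp only [Fintype.card_prod, Fintype.card_fin, Finset.card_univ]
    congr 1
    exact Nat.sub_eq_of_eq_add (by ring)
  rw [h01, ← hzero, ← htot, ← hsplit]

section Card11

variable (p q : ℕ)

private def ZR : Finset (Fin (p+1) × Fin (q+1) × Fin 2) :=
  Finset.univ.image (fun j : Fin (q+1) => (Fin.last p, j, 1))
private def ZC : Finset (Fin (p+1) × Fin (q+1) × Fin 2) :=
  Finset.univ.image (fun i : Fin (p+1) => (i, Fin.last q, 1))
private def ZR2 : Finset (Fin (p+1) × Fin (q+1) × Fin 2) :=
  Finset.univ.image (fun x : Fin (q+1) × Fin 2 => (Fin.last p, x.1, x.2))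
private def ZC2 : Finset (Fin (p+1) × Fin (q+1) × Fin 2) :=
  Finset.univ.image (fun x : Fin (p+1) × Fin 2 => (x.1, Fin.last q, x.2))

private lemma cardZR : (ZR p q).card = q + 1 := by
  rw [ZR, Finset.card_image_of_injective _ (fun a b h => by
    simpa using congrArg (fun z : Fin (p+1) × Fin (q+1) × Fin 2 => z.2.1) h)]
  simp

private lemma cardZC : (ZC p q).card = p + 1 := by
  rw [ZC, Finset.card_image_of_injective _ (fun a b h => by
    simpa using congrArg (fun z : Fin (p+1) × Fin (q+1) × Fin 2 => z.1) h)]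
  simp

private lemma cardZR2 : (ZR2 p q).card = (q + 1) * 2 := by
  rw [ZR2, Finset.card_image_of_injective _ (fun a b h => by
    simp only [Prod.mk.injEq] at h
    exact Prod.ext h.2.1 h.2.2)]
  simp

private lemma cardZC2 : (ZC2 p q).card = (p + 1) * 2 := by
  rw [ZC2, Finset.card_image_of_injective _ (fun a b h => by
    simp only [Prod.mk.injEq] at h
    exact Prod.ext h.1 h.2.2)]
  simp

private lemma interRC : ZR p q ∩ ZC p q = {(Fin.last p, Fin.last q, 1)} := by
  ext x
  simp only [ZR, ZC, Finset.mem_inter, Finset.mem_image, Finset.mem_univ, true_and,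
    Finset.mem_singleton]
  constructor
  · rintro ⟨⟨j, rfl⟩, ⟨i, h⟩⟩
    have := congrArg (fun z : Fin (p+1) × Fin (q+1) × Fin 2 => z.2.1) h
    simp only at this
    rw [← this]
  · rintro rfl
    exact ⟨⟨Fin.last q, rfl⟩, ⟨Fin.last p, rfl⟩⟩

private lemma interR2C : ZR2 p q ∩ ZC p q = {(Fin.last p, Fin.last q, 1)} := by
  ext x
  simp only [ZR2, ZC, Finset.mem_inter, Finset.mem_image, Finset.mem_univ, true_and,
    Finset.mem_singleton]
  constructor
  · rintro ⟨⟨⟨j, s⟩, rfl⟩, ⟨i, h⟩⟩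
    have h1 := congrArg (fun z : Fin (p+1) × Fin (q+1) × Fin 2 => z.2.1) h
    have h2 := congrArg (fun z : Fin (p+1) × Fin (q+1) × Fin 2 => z.2.2) h
    simp only at h1 h2
    rw [← h1, ← h2]
  · rintro rfl
    exact ⟨⟨(Fin.last q, 1), rfl⟩, ⟨Fin.last p, rfl⟩⟩

private lemma interRC2 : ZR p q ∩ ZC2 p q = {(Fin.last p, Fin.last q, 1)} := by
  ext x
  simp only [ZR, ZC2, Finset.mem_inter, Finset.mem_image, Finset.mem_univ, true_and,
    Finset.mem_singleton]
  constructor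
  · rintro ⟨⟨j, rfl⟩, ⟨i, h⟩⟩
    have h1 := congrArg (fun z : Fin (p+1) × Fin (q+1) × Fin 2 => z.2.1) h
    simp only at h1
    rw [← h1]
  · rintro rfl
    exact ⟨⟨Fin.last q, rfl⟩, ⟨(Fin.last p, 1), rfl⟩⟩

private lemma interR2C2 :
    ZR2 p q ∩ ZC2 p q = {(Fin.last p, Fin.last q, 0), (Fin.last p, Fin.last q, 1)} := by
  ext x
  simp only [ZR2, ZC2, Finset.mem_inter, Finset.mem_image, Finset.mem_univ, true_and,
    Finset.mem_insert, Finset.mem_singleton]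
  constructor
  · rintro ⟨⟨⟨j, s⟩, rfl⟩, ⟨i, h⟩⟩
    have h1 := congrArg (fun z : Fin (p+1) × Fin (q+1) × Fin 2 => z.2.1) h
    simp only at h1
    fin_cases s
    · left; rw [← h1]; rfl
    · right; rw [← h1]; rfl
  · rintro (rfl | rfl)
    · exact ⟨⟨(Fin.last q, 0), rfl⟩, ⟨(Fin.last p, 0), rfl⟩⟩
    · exact ⟨⟨(Fin.last q, 1), rfl⟩, ⟨(Fin.last p, 1), rfl⟩⟩

private lemma cardRC : (ZR p q ∪ ZC p q).card = p + q + 1 := by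
  have h := Finset.card_union_add_card_inter (ZR p q) (ZC p q)
  rw [interRC, cardZR, cardZC, Finset.card_singleton] at h
  omega

private lemma cardR2C : (ZR2 p q ∪ ZC p q).card = 2 * q + p + 2 := by
  have h := Finset.card_union_add_card_inter (ZR2 p q) (ZC p q)
  rw [interR2C, cardZR2, cardZC, Finset.card_singleton] at h
  omega

private lemma cardRC2 : (ZR p q ∪ ZC2 p q).card = 2 * p + q + 2 := by
  have h := Finset.card_union_add_card_inter (ZR p q) (ZC2 p q)
  rw [interRC2, cardZR, cardZC2, Finset.card_singleton] at h
  omega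

private lemma cardR2C2 : (ZR2 p q ∪ ZC2 p q).card = 2 * p + 2 * q + 2 := by
  have h := Finset.card_union_add_card_inter (ZR2 p q) (ZC2 p q)
  rw [interR2C2, cardZR2, cardZC2] at h
  rw [Finset.card_insert_of_notMem (by simp), Finset.card_singleton] at h
  omega

end Card11

section Card11b

variable (p q : ℕ)

private def PRow (f : Fin (p+1) × Fin (q+1) × Fin 2 → ℕ) : Prop :=
  ∀ j, f (Fin.last p, j, 1) = 0
private def PCol (f : Fin (p+1) × Fin (q+1) × Fin 2 → ℕ) : Prop :=
  ∀ i, f (i, Fin.last q, 1) = 0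
private def QRow (f : Fin (p+1) × Fin (q+1) × Fin 2 → ℕ) : Prop :=
  0 < ∑ j, f (Fin.last p, j, 0)
private def QCol (f : Fin (p+1) × Fin (q+1) × Fin 2 → ℕ) : Prop :=
  0 < ∑ i, f (i, Fin.last q, 0)

variable (f : Fin (p+1) × Fin (q+1) × Fin 2 → ℕ)

private lemma zr1 : (∀ i ∈ ZR p q ∪ ZC p q, f i = 0) ↔ PRow p q f ∧ PCol p q f := by
  simp only [ZR, ZC, Finset.mem_union, Finset.mem_image, Finset.mem_univ, true_and,
    PRow, PCol]
  constructor
  · intro h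
    exact ⟨fun j => h _ (Or.inl ⟨j, rfl⟩), fun i => h _ (Or.inr ⟨i, rfl⟩)⟩
  · rintro ⟨h1, h2⟩ x (⟨j, rfl⟩ | ⟨i, rfl⟩)
    exacts [h1 j, h2 i]

private lemma zr2 : (∀ i ∈ ZR2 p q ∪ ZC p q, f i = 0)
    ↔ (PRow p q f ∧ PCol p q f) ∧ ¬ QRow p q f := by
  simp only [ZR2, ZC, Finset.mem_union, Finset.mem_image, Finset.mem_univ, true_and,
    PRow, PCol, QRow, not_pos_sum_iff]
  constructor
  · intro h
    exact ⟨⟨fun j => h _ (Or.inl ⟨(j, 1), rfl⟩), fun i => h _ (Or.inr ⟨i, rfl⟩)⟩,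
      fun j => h _ (Or.inl ⟨(j, 0), rfl⟩)⟩
  · rintro ⟨⟨h1, h2⟩, h3⟩ x (⟨⟨j, s⟩, rfl⟩ | ⟨i, rfl⟩)
    · fin_cases s
      · exact h3 j
      · exact h1 j
    · exact h2 i

private lemma zr3 : (∀ i ∈ ZR p q ∪ ZC2 p q, f i = 0)
    ↔ (PRow p q f ∧ PCol p q f) ∧ ¬ QCol p q f := by
  simp only [ZR, ZC2, Finset.mem_union, Finset.mem_image, Finset.mem_univ, true_and,
    PRow, PCol, QCol, not_pos_sum_iff]
  constructor
  · intro h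
    exact ⟨⟨fun j => h _ (Or.inl ⟨j, rfl⟩), fun i => h _ (Or.inr ⟨(i, 1), rfl⟩)⟩,
      fun i => h _ (Or.inr ⟨(i, 0), rfl⟩)⟩
  · rintro ⟨⟨h1, h2⟩, h3⟩ x (⟨j, rfl⟩ | ⟨⟨i, s⟩, rfl⟩)
    · exact h1 j
    · fin_cases s
      · exact h3 i
      · exact h2 i

private lemma zr4 : (∀ i ∈ ZR2 p q ∪ ZC2 p q, f i = 0)
    ↔ ((PRow p q f ∧ PCol p q f) ∧ ¬ QCol p q f) ∧ ¬ QRow p q f := by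
  simp only [ZR2, ZC2, Finset.mem_union, Finset.mem_image, Finset.mem_univ, true_and,
    PRow, PCol, QRow, QCol, not_pos_sum_iff]
  constructor
  · intro h
    exact ⟨⟨⟨fun j => h _ (Or.inl ⟨(j, 1), rfl⟩), fun i => h _ (Or.inr ⟨(i, 1), rfl⟩)⟩,
      fun i => h _ (Or.inr ⟨(i, 0), rfl⟩)⟩, fun j => h _ (Or.inl ⟨(j, 0), rfl⟩)⟩
  · rintro ⟨⟨⟨h1, h2⟩, h3⟩, h4⟩ x (⟨⟨j, s⟩, rfl⟩ | ⟨⟨i, s⟩, rfl⟩)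
    · fin_cases s
      · exact h4 j
      · exact h1 j
    · fin_cases s
      · exact h3 i
      · exact h2 i

end Card11b

private lemma card11 (n p q : ℕ) :
    Nat.card (GSCM11 n p q) + Nat.multichoose (2 * p * q + p) n
        + Nat.multichoose (2 * p * q + q) n
      = Nat.multichoose (2 * p * q + p + q + 1) n + Nat.multichoose (2 * p * q) n := by
  classical
  have h11 : Nat.card (GSCM11 n p q)
      = Nat.card ({f : Fin (p+1) × Fin (q+1) × Fin 2 → ℕ |
          ((∑ i, f i = n) ∧ ((PRow p q f ∧ PCol p q f) ∧ QRow p q f)) ∧ QCol p q f} : Set _) :=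
    Nat.card_congr ((matEquiv (p+1) (q+1)).subtypeEquiv fun A => by
      simp only [GSCM11, Set.mem_setOf_eq, sum_matEquiv, matEquiv_apply1, matEquiv_apply2,
        PRow, PCol, QRow, QCol]
      tauto)
  have sA := card_split_s9 n (fun f => PRow p q f ∧ PCol p q f) (QRow p q)
  have sB := card_split_s9 n (fun f => (PRow p q f ∧ PCol p q f) ∧ QRow p q f) (QCol p q)
  have sD := card_split_s9 n (fun f => (PRow p q f ∧ PCol p q f) ∧ ¬ QCol p q f) (QRow p q)
  have bridgeB : ({f : Fin (p+1) × Fin (q+1) × Fin 2 → ℕ |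
        (∑ i, f i = n) ∧ ((PRow p q f ∧ PCol p q f) ∧ QRow p q f)} : Set _)
      = {f | ((∑ i, f i = n) ∧ (PRow p q f ∧ PCol p q f)) ∧ QRow p q f} := by
    ext f; exact ⟨fun h => ⟨⟨h.1, h.2.1⟩, h.2.2⟩, fun h => ⟨h.1.1, h.1.2, h.2⟩⟩
  have bridgeD : ({f : Fin (p+1) × Fin (q+1) × Fin 2 → ℕ |
        ((∑ i, f i = n) ∧ ((PRow p q f ∧ PCol p q f) ∧ ¬ QCol p q f)) ∧ QRow p q f} : Set _)
      = {f | ((∑ i, f i = n) ∧ ((PRow p q f ∧ PCol p q f) ∧ QRow p q f)) ∧ ¬ QCol p q f} := by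
    ext f
    exact ⟨fun h => ⟨⟨h.1.1, h.1.2.1, h.2⟩, h.1.2.2⟩, fun h => ⟨⟨h.1.1, h.1.2.1, h.2⟩, h.1.2.2⟩⟩
  have vT : Nat.card ({f : Fin (p+1) × Fin (q+1) × Fin 2 → ℕ |
        (∑ i, f i = n) ∧ (PRow p q f ∧ PCol p q f)} : Set _)
      = Nat.multichoose (2 * p * q + p + q + 1) n := by
    rw [card_zero_set n _ (ZR p q ∪ ZC p q) (fun f => by
      rw [Set.mem_setOf_eq, zr1])]
    rw [cardRC]
    simp only [Fintype.card_prod, Fintype.card_fin]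
    congr 1
    exact Nat.sub_eq_of_eq_add (by ring)
  have vA2 : Nat.card ({f : Fin (p+1) × Fin (q+1) × Fin 2 → ℕ |
        ((∑ i, f i = n) ∧ (PRow p q f ∧ PCol p q f)) ∧ ¬ QRow p q f} : Set _)
      = Nat.multichoose (2 * p * q + p) n := by
    rw [card_zero_set n _ (ZR2 p q ∪ ZC p q) (fun f => by
      rw [Set.mem_setOf_eq, zr2]
      exact ⟨fun h => ⟨h.1.1, h.1.2, h.2⟩, fun h => ⟨⟨h.1, h.2.1⟩, h.2.2⟩⟩)]
    rw [cardR2C]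
    simp only [Fintype.card_prod, Fintype.card_fin]
    congr 1
    exact Nat.sub_eq_of_eq_add (by ring)
  have vD0 : Nat.card ({f : Fin (p+1) × Fin (q+1) × Fin 2 → ℕ |
        (∑ i, f i = n) ∧ ((PRow p q f ∧ PCol p q f) ∧ ¬ QCol p q f)} : Set _)
      = Nat.multichoose (2 * p * q + q) n := by
    rw [card_zero_set n _ (ZR p q ∪ ZC2 p q) (fun f => by
      rw [Set.mem_setOf_eq, zr3])]
    rw [cardRC2]
    simp only [Fintype.card_prod, Fintype.card_fin]
    congr 1
    exact Nat.sub_eq_of_eq_add (by ring)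
  have vD2 : Nat.card ({f : Fin (p+1) × Fin (q+1) × Fin 2 → ℕ |
        ((∑ i, f i = n) ∧ ((PRow p q f ∧ PCol p q f) ∧ ¬ QCol p q f)) ∧ ¬ QRow p q f} : Set _)
      = Nat.multichoose (2 * p * q) n := by
    rw [card_zero_set n _ (ZR2 p q ∪ ZC2 p q) (fun f => by
      rw [Set.mem_setOf_eq, zr4]
      exact ⟨fun h => ⟨h.1.1, ⟨h.1.2.1, h.1.2.2⟩, h.2⟩, fun h => ⟨⟨h.1, h.2.1.1, h.2.1.2⟩, h.2.2⟩⟩)]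
    rw [cardR2C2]
    simp only [Fintype.card_prod, Fintype.card_fin]
    congr 1
    exact Nat.sub_eq_of_eq_add (by ring)
  rw [bridgeB] at sB
  rw [bridgeD] at sD
  rw [vT, vA2] at sA
  rw [vD0, vD2] at sD
  rw [h11, ← sA, ← sD, ← sB]
  ring

theorem GSCMcard_eq (n p q : ℕ) :
    GSCMcard n p q = Nat.multichoose (2 * p * q + p + q + 1) n := by
  have h0 := card00 n p q
  have h1 := card10 n p q
  have h2 := card01 n p q
  have h3 := card11 n p q
  rw [GSCMcard]
  generalize hA : Nat.card (GSCM00 n p q) = a at h0 ⊢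
  generalize hB : Nat.card (GSCM10 n p q) = b at h1 ⊢
  generalize hC : Nat.card (GSCM01 n p q) = c at h2 ⊢
  generalize hD : Nat.card (GSCM11 n p q) = d at h3 ⊢
  generalize hP : Nat.multichoose (2 * p * q + p + q + 1) n = mP at h3 ⊢
  generalize hp : Nat.multichoose (2 * p * q + p) n = mp at h2 h3
  generalize hq : Nat.multichoose (2 * p * q + q) n = mq at h1 h3
  generalize h00 : Nat.multichoose (2 * p * q) n = m0 at h0 h1 h2 h3
  omega

lemma ascFactorial_cast_real (M : ℕ) : ∀ k : ℕ,
    (M.ascFactorial k : ℝ) = ∏ i ∈ Finset.range k, ((M : ℝ) + i)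
  | 0 => by simp [Nat.ascFactorial_zero]
  | (k + 1) => by
    rw [Nat.ascFactorial_succ, Finset.prod_range_succ, ← ascFactorial_cast_real M k]
    push_cast
    ring

lemma multichoose_real (M k : ℕ) :
    (Nat.multichoose M k : ℝ) * (k.factorial : ℝ) = ∏ i ∈ Finset.range k, ((M : ℝ) + i) := by
  rw [← ascFactorial_cast_real]
  rw [Nat.ascFactorial_eq_factorial_mul_choose', ← Nat.multichoose_eq]
  push_cast
  ring

lemma poly_coeffs (m : ℕ) : ∃ c : ℕ → ℝ, (∀ k, k ≤ m → 0 < c k) ∧ (∀ k, m < k → c k = 0) ∧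
    ∀ x : ℝ, ∏ i ∈ Finset.range m, (2 * x + i + 1 / 2)
      = ∑ k ∈ Finset.range (m + 1), c k * x ^ k := by
  induction m with
  | zero =>
    refine ⟨fun k => if k = 0 then 1 else 0, ?_, ?_, ?_⟩
    · intro k hk
      simp [Nat.le_zero.mp hk]
    · intro k hk
      simp [Nat.pos_iff_ne_zero.mp hk]
    · intro x
      simp
  | succ m ih =>
    obtain ⟨c, hpos, hzero, hid⟩ := ih
    have hnn : ∀ k, 0 ≤ c k := by
      intro k
      rcases le_or_gt k m with h | h
      · exact (hpos k h).le
      · rw [hzero k h]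
    have hm2 : (0 : ℝ) < (m : ℝ) + 1 / 2 := by positivity
    refine ⟨fun k => ((m : ℝ) + 1 / 2) * c k + 2 * (if k = 0 then 0 else c (k - 1)), ?_, ?_, ?_⟩
    · intro k hk
      dsimp only
      rcases Nat.eq_zero_or_pos k with rfl | hk0
      · simpa using mul_pos hm2 (hpos 0 (Nat.zero_le m))
      · rcases le_or_gt k m with h | h
        · have h2 : (0:ℝ) ≤ 2 * (if k = 0 then 0 else c (k - 1)) := by
            split
            · norm_num
            · exact mul_nonneg (by norm_num) (hnn _)
          nlinarith [mul_pos hm2 (hpos k h)]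
        · have hk' : k = m + 1 := by omega
          subst hk'
          rw [hzero _ (Nat.lt_succ_self m), if_neg (by omega)]
          simpa using mul_pos (by norm_num : (0:ℝ) < 2) (hpos m le_rfl)
    · intro k hk
      dsimp only
      rw [hzero k (by omega), if_neg (by omega), hzero (k - 1) (by omega)]
      ring
    · intro x
      have e1 : ∑ k ∈ Finset.range (m + 2),
            (((m : ℝ) + 1 / 2) * c k + 2 * (if k = 0 then 0 else c (k - 1))) * x ^ k
          = (∑ k ∈ Finset.range (m + 2), ((m : ℝ) + 1 / 2) * (c k * x ^ k))
            + ∑ k ∈ Finset.range (m + 2), 2 * (if k = 0 then 0 else c (k - 1)) * x ^ k := by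
        rw [← Finset.sum_add_distrib]
        exact Finset.sum_congr rfl fun k _ => by ring
      have e2 : ∑ k ∈ Finset.range (m + 2), ((m : ℝ) + 1 / 2) * (c k * x ^ k)
          = ((m : ℝ) + 1 / 2) * ∑ k ∈ Finset.range (m + 1), c k * x ^ k := by
        rw [Finset.sum_range_succ, hzero (m + 1) (Nat.lt_succ_self m), ← Finset.mul_sum]
        ring
      have e3 : ∑ k ∈ Finset.range (m + 2), 2 * (if k = 0 then 0 else c (k - 1)) * x ^ k
          = 2 * x * ∑ k ∈ Finset.range (m + 1), c k * x ^ k := by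
        rw [Finset.sum_range_succ']
        have hterm : ∀ k, 2 * (if k + 1 = 0 then (0:ℝ) else c (k + 1 - 1)) * x ^ (k + 1)
            = 2 * x * (c k * x ^ k) := fun k => by
          rw [if_neg (Nat.succ_ne_zero k), Nat.add_sub_cancel]
          ring
        rw [Finset.sum_congr rfl (fun k _ => hterm k)]
        norm_num [Finset.mul_sum]
      rw [Finset.prod_range_succ, hid x, show m + 1 + 1 = m + 2 from rfl, e1, e2, e3]
      push_cast
      ring

/-- For every `n ≥ 1` there exist strictly positive reals `d(n,0), …, d(n,n)` such that
`|GSCM_n(p,q)| = ∑_{k=0}^n d(n,k) · (p + 1/2)^k · (q + 1/2)^k` for all `0 ≤ p, q ≤ n`;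
equivalently, the matrix `L = (|GSCM_n(p,q)|)` factors as `L = V · D · Vᵀ` with
`V = ((i + 1/2)^j)` a Vandermonde-type matrix and `D` diagonal with positive entries. -/
theorem GSCMcard_eq_sum_pos (n : ℕ) (hn : 1 ≤ n) :
    ∃ d : Fin (n + 1) → ℝ, (∀ k, 0 < d k) ∧
      ∀ p q : ℕ, p ≤ n → q ≤ n →
        (GSCMcard n p q : ℝ) =
          ∑ k : Fin (n + 1), d k * ((p : ℝ) + 1 / 2) ^ (k : ℕ) * ((q : ℝ) + 1 / 2) ^ (k : ℕ) := by
  obtain ⟨c, hpos, hzero, hid⟩ := poly_coeffs n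
  have hfact : (0 : ℝ) < (n.factorial : ℝ) := by exact_mod_cast n.factorial_pos
  refine ⟨fun k => c k / n.factorial,
    fun k => div_pos (hpos k (Nat.lt_succ_iff.mp k.isLt)) hfact, ?_⟩
  intro p q _ _
  set x : ℝ := ((p : ℝ) + 1 / 2) * ((q : ℝ) + 1 / 2) with hx
  have hprod : ∏ i ∈ Finset.range n, (((2 * p * q + p + q + 1 : ℕ) : ℝ) + i)
      = ∏ i ∈ Finset.range n, (2 * x + i + 1 / 2) :=
    Finset.prod_congr rfl fun i _ => by rw [hx]; push_cast; ring
  have h1 : (GSCMcard n p q : ℝ) * (n.factorial : ℝ)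
      = ∑ k ∈ Finset.range (n + 1), c k * x ^ k := by
    rw [GSCMcard_eq n p q, multichoose_real, hprod, hid x]
  have h2 : ∑ k : Fin (n + 1),
        (c (k : ℕ) / n.factorial) * ((p : ℝ) + 1 / 2) ^ (k : ℕ) * ((q : ℝ) + 1 / 2) ^ (k : ℕ)
      = (∑ k ∈ Finset.range (n + 1), c k * x ^ k) / n.factorial := by
    rw [Fin.sum_univ_eq_sum_range
      (fun k => c k / n.factorial * ((p : ℝ) + 1 / 2) ^ k * ((q : ℝ) + 1 / 2) ^ k),
      Finset.sum_div]
    exact Finset.sum_congr rfl fun k _ => by rw [hx, mul_pow]; ring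
  rw [h2, ← h1, mul_div_assoc, div_self (ne_of_gt hfact), mul_one]
end

section
/- For all positive integers n, k with n ≥ k and every x ∈ ℂ, ∑_{i=0}^k (−1)^i · i! · C(n,i) · C(k,i) · ∏_{j=0}^{n−1−i} (x + k + j) = ∏_{j=0}^{n−1} (x + j). -/
private lemma aux_key (m i : ℕ) :
    (((i+1).factorial : ℂ)) * ((m+1).choose (i+1) : ℂ)
      = (m+1) * ((i.factorial : ℂ) * (m.choose i : ℂ)) := by
  have h := Nat.add_one_mul_choose_eq m i
  have h' : ((m+1) * m.choose i : ℕ) = ((m+1).choose (i+1) * (i+1) : ℕ) := h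
  have hc : ((m:ℂ)+1) * (m.choose i : ℂ) = ((m+1).choose (i+1) : ℂ) * ((i:ℂ)+1) := by
    exact_mod_cast congrArg (Nat.cast : ℕ → ℂ) h'
  rw [Nat.factorial_succ]
  push_cast
  linear_combination (-(i.factorial : ℂ)) * hc

private lemma aux_main : ∀ k n : ℕ, k ≤ n → ∀ x : ℂ,
    ∑ i ∈ Finset.range (k + 1),
      (-1 : ℂ) ^ i * (i.factorial : ℂ) * (n.choose i : ℂ) * (k.choose i : ℂ) *
        ∏ j ∈ Finset.range (n - i), (x + (k : ℂ) + (j : ℂ)) =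
    ∏ j ∈ Finset.range n, (x + (j : ℂ)) := by
  intro k
  induction k with
  | zero =>
    intro n _ x
    simp
  | succ k ih =>
    intro n hn x
    obtain ⟨m, rfl⟩ : ∃ m, n = m + 1 := ⟨n - 1, by omega⟩
    have hkm : k ≤ m := by omega
    have ih1 := ih (m+1) (by omega) (x+1)
    have ih2 := ih m hkm (x+1)
    -- g i : the S(m+1,k,x+1) summand, written with x + (k+1)
    set g : ℕ → ℂ := fun i =>
      (-1 : ℂ) ^ i * (i.factorial : ℂ) * ((m+1).choose i : ℂ) * (k.choose i : ℂ) *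
        ∏ j ∈ Finset.range (m + 1 - i), (x + ((k:ℂ)+1) + (j : ℂ)) with hg
    set t : ℕ → ℂ := fun i =>
      (-1 : ℂ) ^ i * (i.factorial : ℂ) * (m.choose i : ℂ) * (k.choose i : ℂ) *
        ∏ j ∈ Finset.range (m - i), (x + ((k:ℂ)+1) + (j : ℂ)) with ht
    have hg_sum : ∑ i ∈ Finset.range (k+1), g i
        = ∏ j ∈ Finset.range (m+1), ((x+1) + (j : ℂ)) := by
      rw [← ih1]
      refine Finset.sum_congr rfl fun i _ => ?_
      simp only [hg]
      congr 1
      refine Finset.prod_congr rfl fun j _ => ?_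
      ring
    have ht_sum : ∑ i ∈ Finset.range (k+1), t i
        = ∏ j ∈ Finset.range m, ((x+1) + (j : ℂ)) := by
      rw [← ih2]
      refine Finset.sum_congr rfl fun i _ => ?_
      simp only [ht]
      congr 1
      refine Finset.prod_congr rfl fun j _ => ?_
      ring
    -- the actual summand f
    have hcast : ((k+1 : ℕ) : ℂ) = (k:ℂ)+1 := by push_cast; ring
    rw [show (k+1+1) = (k+1)+1 from rfl, Finset.sum_range_succ']
    have hstep : ∀ i ∈ Finset.range (k+1),
        (-1 : ℂ) ^ (i+1) * ((i+1).factorial : ℂ) * ((m+1).choose (i+1) : ℂ) *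
            ((k+1).choose (i+1) : ℂ) *
          ∏ j ∈ Finset.range (m + 1 - (i+1)), (x + ((k+1:ℕ) : ℂ) + (j : ℂ))
        = g (i+1) - ((m:ℂ)+1) * t i := by
      intro i _
      have hsub : m + 1 - (i+1) = m - i := by omega
      have hpas : (((k+1).choose (i+1) : ℕ) : ℂ)
          = (k.choose i : ℂ) + (k.choose (i+1) : ℂ) := by
        rw [Nat.choose_succ_succ]; push_cast; ring
      rw [hsub, hpas, hcast]
      simp only [hg, ht, hsub]
      have hk2 := aux_key m i
      linear_combination ((-1:ℂ)^(i+1) * (k.choose i : ℂ) *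
        ∏ j ∈ Finset.range (m - i), (x + ((k:ℂ)+1) + (j:ℂ))) * hk2
    rw [Finset.sum_congr rfl hstep, Finset.sum_sub_distrib, ← Finset.mul_sum, ht_sum]
    have hg0 : (-1 : ℂ) ^ 0 * ((0:ℕ).factorial : ℂ) * ((m+1).choose 0 : ℂ) *
        ((k+1).choose 0 : ℂ) *
        ∏ j ∈ Finset.range (m + 1 - 0), (x + ((k+1:ℕ) : ℂ) + (j : ℂ)) = g 0 := by
      simp [hg, hcast]
    rw [hg0]
    have hsum2 : ∑ i ∈ Finset.range (k+1), g (i+1) + g 0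
        = ∑ i ∈ Finset.range (k+2), g i := (Finset.sum_range_succ' g (k+1)).symm
    have hlast : g (k+1) = 0 := by
      simp [hg, Nat.choose_succ_self]
    have hsum3 : ∑ i ∈ Finset.range (k+2), g i = ∑ i ∈ Finset.range (k+1), g i := by
      rw [Finset.sum_range_succ, hlast, add_zero]
    rw [show ∑ i ∈ Finset.range (k+1), g (i+1) - ((m:ℂ)+1) * ∏ j ∈ Finset.range m, ((x+1) + (j:ℂ)) + g 0
        = (∑ i ∈ Finset.range (k+1), g (i+1) + g 0) - ((m:ℂ)+1) * ∏ j ∈ Finset.range m, ((x+1) + (j:ℂ)) from by ring,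
      hsum2, hsum3, hg_sum]
    rw [Finset.prod_range_succ]
    rw [Finset.prod_range_succ' (fun j => x + (j:ℂ)) m]
    have heq : ∏ j ∈ Finset.range m, (x + ((j+1:ℕ):ℂ)) = ∏ j ∈ Finset.range m, ((x+1) + (j:ℂ)) :=
      Finset.prod_congr rfl (fun j _ => by push_cast; ring)
    rw [heq]
    push_cast
    ring

/-- For all positive integers `n ≥ k` and every `x ∈ ℂ`,
`∑_{i=0}^k (−1)^i · i! · C(n,i) · C(k,i) · ∏_{j=0}^{n−1−i} (x + k + j) = ∏_{j=0}^{n−1} (x + j)`. -/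
theorem sum_alternating_prod_eq_prod (n k : ℕ) (hn : 0 < n) (hk : 0 < k) (hkn : k ≤ n)
    (x : ℂ) :
    ∑ i ∈ Finset.range (k + 1),
      (-1 : ℂ) ^ i * (i.factorial : ℂ) * (n.choose i : ℂ) * (k.choose i : ℂ) *
        ∏ j ∈ Finset.range (n - i), (x + (k : ℂ) + (j : ℂ)) =
    ∏ j ∈ Finset.range n, (x + (j : ℂ)) := by
  exact aux_main k n hkn x
end

section
/- For every integer m ≥ 2, the contingency metamatrix of the Coxeter system of type I₂(m) (the dihedral system of rank 2 with (s₁s₂)^m = 1) equals the 3×3 matrix with rows (2m, 2m, 1), (2m, 2m+2, 2), (1, 2, 1). -/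
/-- The standard parabolic subgroup `W_I` of a Coxeter system, generated by the simple
reflections indexed by `I`. -/
noncomputable def parabolic {B W : Type*} [Group W] {M : CoxeterMatrix B}
    (cs : CoxeterSystem M W) (I : Set B) : Subgroup W :=
  Subgroup.closure (cs.simple '' I)

/-- The contingency metamatrix of a Coxeter system of rank `n`:
`M p q = ∑_{|I| = p, |J| = q} #(W_I \ W / W_J)`. -/
noncomputable def metamatrix {n : ℕ} {W : Type*} [Group W] {M : CoxeterMatrix (Fin n)}
    (cs : CoxeterSystem M W) : Matrix (Fin (n + 1)) (Fin (n + 1)) ℕ :=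
  Matrix.of fun p q =>
    ∑ I ∈ (Finset.univ : Finset (Fin n)).powersetCard (p : ℕ),
      ∑ J ∈ (Finset.univ : Finset (Fin n)).powersetCard (q : ℕ),
        Nat.card (DoubleCoset.Quotient ((parabolic cs ↑I : Subgroup W) : Set W)
          ((parabolic cs ↑J : Subgroup W) : Set W))


section DosetGeneric
variable {G : Type*} [Group G] {G' : Type*} [Group G']

theorem doset_card_top_right (H : Subgroup G) :
    Nat.card (DoubleCoset.Quotient (H : Set G) ((⊤ : Subgroup G) : Set G)) = 1 := by
  haveI : Subsingleton (DoubleCoset.Quotient (H : Set G) ((⊤ : Subgroup G) : Set G)) := by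
    constructor
    intro q q'
    rw [← DoubleCoset.out_eq' H ⊤ q, ← DoubleCoset.out_eq' H ⊤ q', DoubleCoset.eq]
    exact ⟨1, one_mem _, q.out⁻¹ * (1 * q'.out), trivial, by group⟩
  haveI : Nonempty (DoubleCoset.Quotient (H : Set G) ((⊤ : Subgroup G) : Set G)) :=
    ⟨DoubleCoset.mk H ⊤ 1⟩
  exact Nat.card_eq_one_iff_unique.mpr ⟨inferInstance, inferInstance⟩

theorem doset_card_top_left (K : Subgroup G) :
    Nat.card (DoubleCoset.Quotient (((⊤ : Subgroup G) : Subgroup G) : Set G) (K : Set G)) = 1 := by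
  haveI : Subsingleton (DoubleCoset.Quotient ((⊤ : Subgroup G) : Set G) (K : Set G)) := by
    constructor
    intro q q'
    rw [← DoubleCoset.out_eq' ⊤ K q, ← DoubleCoset.out_eq' ⊤ K q', DoubleCoset.eq]
    exact ⟨q'.out * q.out⁻¹, trivial, 1, one_mem _, by group⟩
  haveI : Nonempty (DoubleCoset.Quotient ((⊤ : Subgroup G) : Set G) (K : Set G)) :=
    ⟨DoubleCoset.mk ⊤ K 1⟩
  exact Nat.card_eq_one_iff_unique.mpr ⟨inferInstance, inferInstance⟩

/-- transport of double coset quotients along a group isomorphism -/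
noncomputable def dosetEquivOfMulEquiv (e : G ≃* G') (H K : Subgroup G) :
    DoubleCoset.Quotient (H : Set G) (K : Set G) ≃
      DoubleCoset.Quotient ((H.map e.toMonoidHom : Subgroup G') : Set G')
        ((K.map e.toMonoidHom : Subgroup G') : Set G') := by
  refine Quotient.congr e.toEquiv ?_
  intro a b
  rw [DoubleCoset.rel_iff, DoubleCoset.rel_iff]
  constructor
  · rintro ⟨h, hh, k, hk, rfl⟩
    exact ⟨e h, ⟨h, hh, rfl⟩, e k, ⟨k, hk, rfl⟩, by simp [map_mul]⟩
  · rintro ⟨h', ⟨h, hh, rfl⟩, k', ⟨k, hk, rfl⟩, hb⟩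
    refine ⟨h, hh, k, hk, e.injective ?_⟩
    simpa [map_mul] using hb

theorem doset_card_map (e : G ≃* G') (H K : Subgroup G) :
    Nat.card (DoubleCoset.Quotient (H : Set G) (K : Set G)) =
      Nat.card (DoubleCoset.Quotient ((H.map e.toMonoidHom : Subgroup G') : Set G')
        ((K.map e.toMonoidHom : Subgroup G') : Set G')) :=
  Nat.card_congr (dosetEquivOfMulEquiv e H K)

/-- `⊥ \ G / ⊥ ≃ G` -/
noncomputable def dosetBotBotEquiv :
    DoubleCoset.Quotient (((⊥ : Subgroup G) : Subgroup G) : Set G) ((⊥ : Subgroup G) : Set G) ≃ G where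
  toFun := Quotient.lift id (by
    intro a b hab
    obtain ⟨h, hh, k, hk, rfl⟩ := (DoubleCoset.rel_iff (H := ⊥) (K := ⊥)).mp hab
    simp only [Subgroup.mem_bot] at hh hk
    subst hh; subst hk; simp)
  invFun := DoubleCoset.mk ⊥ ⊥
  left_inv := by
    intro q
    induction q using Quotient.inductionOn
    rfl
  right_inv := fun g => rfl

theorem doset_card_bot_bot :
    Nat.card (DoubleCoset.Quotient (((⊥ : Subgroup G) : Subgroup G) : Set G) ((⊥ : Subgroup G) : Set G))
      = Nat.card G := Nat.card_congr dosetBotBotEquiv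

theorem doset_card_bot_left (K : Subgroup G) :
    Nat.card (DoubleCoset.Quotient (((⊥ : Subgroup G) : Subgroup G) : Set G) (K : Set G)) * Nat.card K
      = Nat.card G := by
  have h1 : DoubleCoset.Quotient (((⊥ : Subgroup G) : Subgroup G) : Set G) (K : Set G) = (G ⧸ K) :=
    DoubleCoset.left_bot_eq_left_quot K
  rw [congrArg Nat.card h1]
  exact (Subgroup.card_eq_card_quotient_mul_card_subgroup K).symm

theorem doset_card_bot_right (H : Subgroup G) :
    Nat.card (DoubleCoset.Quotient ((H : Subgroup G) : Set G) (((⊥ : Subgroup G)) : Set G)) * Nat.card H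
      = Nat.card G := by
  have h1 : DoubleCoset.Quotient ((H : Subgroup G) : Set G) (((⊥ : Subgroup G)) : Set G) =
      _root_.Quotient (QuotientGroup.rightRel H) := DoubleCoset.right_bot_eq_right_quot H
  rw [congrArg Nat.card h1,
    Nat.card_congr (QuotientGroup.quotientRightRelEquivQuotientLeftRel H)]
  exact (Subgroup.card_eq_card_quotient_mul_card_subgroup H).symm

end DosetGeneric


section PairCount
open Finset
variable {m : ℕ} [NeZero m]

/-- the setoid on `ZMod m` identifying `i` with `c - i` -/
def pairSetoid (c : ZMod m) : Setoid (ZMod m) where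
  r i j := j = i ∨ j = c - i
  iseqv := by
    refine ⟨fun i => Or.inl rfl, ?_, ?_⟩
    · rintro i j (rfl | rfl)
      · exact Or.inl rfl
      · exact Or.inr (by ring)
    · rintro i j k (rfl | rfl) (rfl | rfl)
      · exact Or.inl rfl
      · exact Or.inr rfl
      · exact Or.inr rfl
      · exact Or.inl (by ring)

instance pairSetoidDecidable (c : ZMod m) : DecidableRel (pairSetoid c).r :=
  fun _ _ => inferInstanceAs (Decidable (_ ∨ _))

omit [NeZero m] in
theorem pairSetoid_mk_eq {c : ZMod m} {i j : ZMod m} :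
    Quotient.mk (pairSetoid c) i = Quotient.mk (pairSetoid c) j ↔ (j = i ∨ j = c - i) :=
  ⟨fun h => Quotient.exact h, fun h => Quotient.sound h⟩

theorem two_mul_card_pairQuotient (c : ZMod m) :
    2 * Nat.card (Quotient (pairSetoid c)) =
      m + (Finset.univ.filter fun i : ZMod m => i + i = c).card := by
  classical
  rw [Nat.card_eq_fintype_card]
  have h1 : (Finset.univ : Finset (ZMod m)).card =
      ∑ q : Quotient (pairSetoid c),
        (Finset.univ.filter fun i => Quotient.mk (pairSetoid c) i = q).card :=
    Finset.card_eq_sum_card_fiberwise (fun x _ => Finset.mem_univ _)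
  have h2 : (Finset.univ.filter fun i : ZMod m => i + i = c).card =
      ∑ q : Quotient (pairSetoid c),
        ((Finset.univ.filter fun i : ZMod m => i + i = c).filter
          fun i => Quotient.mk (pairSetoid c) i = q).card :=
    Finset.card_eq_sum_card_fiberwise (fun x _ => Finset.mem_univ _)
  have key : ∀ q : Quotient (pairSetoid c),
      (Finset.univ.filter fun i => Quotient.mk (pairSetoid c) i = q).card +
      ((Finset.univ.filter fun i : ZMod m => i + i = c).filter
          fun i => Quotient.mk (pairSetoid c) i = q).card = 2 := by
    intro q
    obtain ⟨i₀, rfl⟩ := Quotient.exists_rep q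
    have hfib : (Finset.univ.filter
        fun i => Quotient.mk (pairSetoid c) i = Quotient.mk (pairSetoid c) i₀) =
        ({i₀, c - i₀} : Finset (ZMod m)) := by
      ext i
      simp only [Finset.mem_filter, Finset.mem_univ, true_and, Finset.mem_insert,
        Finset.mem_singleton, pairSetoid_mk_eq]
      constructor
      · rintro (rfl | h)
        · exact Or.inl rfl
        · right; rw [h]; ring
      · rintro (rfl | rfl)
        · exact Or.inl rfl
        · exact Or.inr (by ring)
    rw [hfib]
    by_cases h0 : c - i₀ = i₀
    · have hfix : ((Finset.univ.filter fun i : ZMod m => i + i = c).filter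
          fun i => Quotient.mk (pairSetoid c) i = Quotient.mk (pairSetoid c) i₀) =
          ({i₀} : Finset (ZMod m)) := by
        ext i
        simp only [Finset.mem_filter, Finset.mem_univ, true_and, Finset.mem_singleton,
          pairSetoid_mk_eq]
        constructor
        · rintro ⟨hi, (rfl | h)⟩
          · rfl
          · linear_combination hi - h
        · rintro rfl
          exact ⟨by linear_combination -h0, Or.inl rfl⟩
      rw [hfix, h0, Finset.pair_eq_singleton]
      simp
    · have hfix : ((Finset.univ.filter fun i : ZMod m => i + i = c).filter
          fun i => Quotient.mk (pairSetoid c) i = Quotient.mk (pairSetoid c) i₀) =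
          (∅ : Finset (ZMod m)) := by
        ext i
        simp only [Finset.mem_filter, Finset.mem_univ, true_and, Finset.notMem_empty,
          iff_false, not_and, pairSetoid_mk_eq]
        rintro hi (rfl | h)
        · exact h0 (by linear_combination -hi)
        · exact h0 (by linear_combination hi - 2 * h)
      rw [hfix, Finset.card_pair (fun h => h0 (by rw [← h])), Finset.card_empty]
  calc 2 * Fintype.card (Quotient (pairSetoid c))
      = ∑ _q : Quotient (pairSetoid c), 2 := by
        rw [Finset.sum_const, Finset.card_univ, smul_eq_mul, mul_comm]
    _ = ∑ q : Quotient (pairSetoid c),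
          ((Finset.univ.filter fun i => Quotient.mk (pairSetoid c) i = q).card +
          ((Finset.univ.filter fun i : ZMod m => i + i = c).filter
            fun i => Quotient.mk (pairSetoid c) i = q).card) :=
        Finset.sum_congr rfl fun q _ => (key q).symm
    _ = m + (Finset.univ.filter fun i : ZMod m => i + i = c).card := by
        rw [Finset.sum_add_distrib, ← h1, ← h2, Finset.card_univ, ZMod.card]

theorem tcard_neg (c : ZMod m) :
    (Finset.univ.filter fun i : ZMod m => i + i = -c).card =
      (Finset.univ.filter fun i : ZMod m => i + i = c).card := by
  apply Finset.card_bij' (fun a _ => -a) (fun a _ => -a) <;>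
  · intro a ha
    simp only [Finset.mem_filter, Finset.mem_univ, true_and] at ha ⊢
    first
    | linear_combination -ha
    | ring

theorem tcard_zero_add_one (hm : 2 ≤ m) :
    (Finset.univ.filter fun i : ZMod m => i + i = 0).card +
      (Finset.univ.filter fun i : ZMod m => i + i = 1).card = 2 := by
  classical
  haveI : Fact (1 < m) := ⟨hm⟩
  have hdisj : Disjoint (Finset.univ.filter fun i : ZMod m => i + i = 0)
      (Finset.univ.filter fun i : ZMod m => i + i = 1) := by
    rw [Finset.disjoint_filter]
    intro i _ h0 h1
    rw [h0] at h1
    exact zero_ne_one h1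
  rw [← Finset.card_union_of_disjoint hdisj, ← Finset.filter_or]
  have hset : (Finset.univ.filter fun i : ZMod m => i + i = 0 ∨ i + i = 1) =
      ({0, (((m + 1) / 2 : ℕ) : ZMod m)} : Finset (ZMod m)) := by
    ext i
    simp only [Finset.mem_filter, Finset.mem_univ, true_and, Finset.mem_insert,
      Finset.mem_singleton]
    constructor
    · intro h
      have hv : (i + i).val = (i.val + i.val) % m := ZMod.val_add i i
      have hlt : i.val < m := ZMod.val_lt i
      have hval : (i + i).val = 0 ∨ (i + i).val = 1 := by
        rcases h with h | h
        · left; rw [h, ZMod.val_zero]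
        · right; rw [h, ZMod.val_one]
      have hcases : i.val = 0 ∨ i.val = (m + 1) / 2 := by
        rcases Nat.lt_or_ge (i.val + i.val) m with hc | hc
        · rw [Nat.mod_eq_of_lt hc] at hv
          omega
        · have h2 : (i.val + i.val) % m = i.val + i.val - m := by
            rw [Nat.mod_eq_sub_mod hc, Nat.mod_eq_of_lt (by omega)]
          rw [h2] at hv
          omega
      rcases hcases with h' | h'
      · left
        have := ZMod.natCast_rightInverse (n := m) i
        rw [← this, h']
        simp
      · right
        have := ZMod.natCast_rightInverse (n := m) i
        rw [← this, h']
    · rintro (rfl | rfl)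
      · left; simp
      · have h2 : 2 * ((m + 1) / 2) = m ∨ 2 * ((m + 1) / 2) = m + 1 := by omega
        have : ((((m + 1) / 2 : ℕ) : ZMod m)) + (((m + 1) / 2 : ℕ) : ZMod m) =
            ((2 * ((m + 1) / 2) : ℕ) : ZMod m) := by push_cast; ring
        rcases h2 with h2 | h2
        · left; rw [this, h2, ZMod.natCast_self]
        · right; rw [this, h2]; push_cast; simp [ZMod.natCast_self]
  rw [hset]
  have hne : (0 : ZMod m) ≠ (((m + 1) / 2 : ℕ) : ZMod m) := by
    intro h
    have hlt : (m + 1) / 2 < m := by omega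
    have := ZMod.val_cast_of_lt hlt
    rw [← h, ZMod.val_zero] at this
    omega
  rw [Finset.card_insert_of_notMem (by simpa using hne), Finset.card_singleton]

end PairCount

section Dihedral
open DihedralGroup
variable {m : ℕ}

def dval (a : ZMod m) : DihedralGroup m → ZMod m
  | DihedralGroup.r i => i
  | DihedralGroup.sr j => j - a

@[simp] theorem dval_r (a i : ZMod m) : dval a (DihedralGroup.r i) = i := rfl
@[simp] theorem dval_sr (a j : ZMod m) : dval a (DihedralGroup.sr j) = j - a := rfl

theorem mem_closure_sr {a : ZMod m} {x : DihedralGroup m} :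
    x ∈ Subgroup.closure {sr a} ↔ x = 1 ∨ x = sr a := by
  have h2 : (sr a : DihedralGroup m) ^ (2 : ℤ) = 1 := by
    rw [zpow_two, sr_mul_sr, sub_self, one_def]
  constructor
  · intro hx
    obtain ⟨k, rfl⟩ := Subgroup.mem_closure_singleton.mp hx
    have hk : k = 2 * (k / 2) + k % 2 := (Int.mul_ediv_add_emod k 2).symm
    have : (sr a : DihedralGroup m) ^ k = (sr a) ^ (k % 2) := by
      conv_lhs => rw [hk]
      rw [zpow_add, zpow_mul, h2, one_zpow, one_mul]
    rw [this]
    rcases Int.emod_two_eq_zero_or_one k with h | h <;> rw [h]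
    · exact Or.inl (zpow_zero _)
    · exact Or.inr (zpow_one _)
  · rintro (rfl | rfl)
    · exact one_mem _
    · exact Subgroup.mem_closure_singleton_self _

theorem card_closure_sr (a : ZMod m) :
    Nat.card (Subgroup.closure ({sr a} : Set (DihedralGroup m))) = 2 := by
  rw [← Subgroup.zpowers_eq_closure, Nat.card_zpowers, orderOf_sr]

theorem closure_sr_pair [NeZero m] :
    Subgroup.closure ({sr 0, sr 1} : Set (DihedralGroup m)) = ⊤ := by
  rw [Subgroup.eq_top_iff']
  have h0 : (sr 0 : DihedralGroup m) ∈ Subgroup.closure ({sr 0, sr 1} : Set (DihedralGroup m)) :=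
    Subgroup.subset_closure (Set.mem_insert _ _)
  have h1 : (sr 1 : DihedralGroup m) ∈ Subgroup.closure ({sr 0, sr 1} : Set (DihedralGroup m)) :=
    Subgroup.subset_closure (Set.mem_insert_of_mem _ rfl)
  have hr : ∀ i : ZMod m, (r i : DihedralGroup m) ∈
      Subgroup.closure ({sr 0, sr 1} : Set (DihedralGroup m)) := by
    intro i
    have : (r 1 : DihedralGroup m) = sr 0 * sr 1 := by rw [sr_mul_sr, sub_zero]
    have hmem : (r 1 : DihedralGroup m) ∈ _ := this ▸ mul_mem h0 h1
    have hpow : (r 1 : DihedralGroup m) ^ i.val = r i := by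
      rw [r_one_pow, ZMod.natCast_rightInverse i]
    exact hpow ▸ pow_mem hmem i.val
  intro x
  cases x with
  | r i => exact hr i
  | sr i =>
      have : (sr i : DihedralGroup m) = sr 0 * r i := by rw [sr_mul_r, zero_add]
      exact this ▸ mul_mem h0 (hr i)

/-- Double cosets of two reflection subgroups, identified with the quotient of `ZMod m`
by the involution `i ↦ (b - a) - i`. -/
noncomputable def dosetSrEquiv (a b : ZMod m) :
    DoubleCoset.Quotient ((Subgroup.closure {sr a} : Subgroup (DihedralGroup m)) : Set (DihedralGroup m))
      ((Subgroup.closure {sr b} : Subgroup (DihedralGroup m)) : Set (DihedralGroup m)) ≃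
    Quotient (pairSetoid (b - a)) where
  toFun := Quotient.lift
    (fun x => Quotient.mk (pairSetoid (b - a)) (dval a x))
    (by
      intro x y hxy
      obtain ⟨h, hh, k, hk, rfl⟩ :=
        (DoubleCoset.rel_iff (H := Subgroup.closure {sr a}) (K := Subgroup.closure {sr b})).mp hxy
      rcases mem_closure_sr.mp hh with rfl | rfl <;>
        rcases mem_closure_sr.mp hk with rfl | rfl <;>
        cases x <;>
        simp only [one_mul, mul_one, r_mul_r, r_mul_sr, sr_mul_r, sr_mul_sr, dval_r, dval_sr] <;>
        refine pairSetoid_mk_eq.mpr ?_ <;>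
        first
        | (left; ring1)
        | (right; ring1))
  invFun := Quotient.lift
    (fun i => DoubleCoset.mk (Subgroup.closure {sr a}) (Subgroup.closure {sr b}) (r i))
    (by
      intro i j hij
      rcases hij with rfl | rfl
      · rfl
      · refine (DoubleCoset.eq _ _ _ _).mpr
          ⟨sr a, Subgroup.mem_closure_singleton_self _, sr b,
            Subgroup.mem_closure_singleton_self _, ?_⟩
        rw [sr_mul_r, sr_mul_sr]
        exact congrArg r (by ring))
  left_inv := by
    intro q
    induction q using Quotient.inductionOn with
    | h x =>
      cases x with
      | r i => rfl
      | sr j =>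
          refine (DoubleCoset.eq _ _ _ _).mpr
            ⟨sr a, Subgroup.mem_closure_singleton_self _, 1, one_mem _, ?_⟩
          rw [mul_one, sr_mul_r, dval_sr]
          exact congrArg sr (by ring)
  right_inv := by
    intro q
    induction q using Quotient.inductionOn with
    | h i => rfl

end Dihedral


open DihedralGroup

section CoxeterSide
variable {m : ℕ} (hm : 2 ≤ m) {W : Type*} [Group W]
  (cs : CoxeterSystem (CoxeterMatrix.I (m - 2)) W)

include hm in
theorem I2m_apply_ne {i j : Fin 2} (h : i ≠ j) : (CoxeterMatrix.I (m - 2)).M i j = m := by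
  show (if i = j then 1 else (m - 2) + 2) = m
  rw [if_neg h]
  omega

theorem I2m_apply_self (i : Fin 2) : (CoxeterMatrix.I (m - 2)).M i i = 1 := by
  show (if i = i then 1 else (m - 2) + 2) = 1
  rw [if_pos rfl]

include hm in
theorem liftable_sr : CoxeterMatrix.IsLiftable (CoxeterMatrix.I (m - 2))
    (fun i : Fin 2 => (sr (i.val : ZMod m) : DihedralGroup m)) := by
  intro i j
  by_cases h : i = j
  · subst h
    rw [I2m_apply_self, pow_one, sr_mul_sr, sub_self, one_def]
  · rw [I2m_apply_ne hm h, sr_mul_sr]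
    have : ((j.val : ZMod m) - (i.val : ZMod m)) = 1 ∨ ((j.val : ZMod m) - (i.val : ZMod m)) = -1 := by
      fin_cases i <;> fin_cases j <;> simp_all
    rcases this with h1 | h1
    · rw [h1, r_one_pow_n]
    · rw [h1]
      have : (r (-1) : DihedralGroup m) = (r 1)⁻¹ := by
        rw [eq_inv_iff_mul_eq_one, r_mul_r, neg_add_cancel, one_def]
      rw [this, inv_pow, r_one_pow_n, inv_one]

section Iso
variable [NeZero m]

/-- product of the two simple reflections -/
noncomputable def csx : W := cs.simple 0 * cs.simple 1

include hm in
theorem csx_pow_m : (csx cs) ^ m = 1 := by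
  have h := cs.simple_mul_simple_pow 0 1
  rwa [show (CoxeterMatrix.I (m - 2)) 0 1 = m from I2m_apply_ne hm (by decide)] at h

/-- the rotation part of the inverse map -/
noncomputable def chi (i : ZMod m) : W := (csx cs) ^ i.val

include hm in
theorem chi_natCast (n : ℕ) : chi cs (n : ZMod m) = (csx cs) ^ n := by
  have hdvd : orderOf (csx cs) ∣ m := orderOf_dvd_of_pow_eq_one (csx_pow_m hm cs)
  rw [chi, ZMod.val_natCast]
  exact pow_eq_pow_iff_modEq.mpr ((Nat.mod_modEq n m).of_dvd hdvd)

include hm in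
theorem chi_add (i j : ZMod m) : chi cs (i + j) = chi cs i * chi cs j := by
  have h : i + j = ((i.val + j.val : ℕ) : ZMod m) := by
    push_cast
    rw [ZMod.natCast_rightInverse i, ZMod.natCast_rightInverse j]
  rw [h, chi_natCast hm, pow_add]
  rfl

theorem chi_zero : chi cs (0 : ZMod m) = 1 := by simp [chi, ZMod.val_zero]

include hm in
theorem chi_neg (i : ZMod m) : chi cs (-i) = (chi cs i)⁻¹ := by
  refine eq_inv_of_mul_eq_one_left ?_
  rw [← chi_add hm, neg_add_cancel, chi_zero]

theorem simple_conj_csx : cs.simple 0 * csx cs * cs.simple 0 = (csx cs)⁻¹ := by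
  rw [csx, mul_inv_rev, cs.inv_simple, cs.inv_simple, ← mul_assoc,
    cs.simple_mul_simple_self, one_mul]

include hm in
theorem simple_conj_chi (i : ZMod m) :
    cs.simple 0 * chi cs i * cs.simple 0 = chi cs (-i) := by
  rw [chi_neg hm, chi, ← inv_pow]
  have h := conj_pow (i := i.val) (a := cs.simple 0) (b := csx cs)
  rw [cs.inv_simple] at h
  rw [← h, simple_conj_csx]

include hm in
theorem chi_mul_simple (i : ZMod m) :
    chi cs i * cs.simple 0 = cs.simple 0 * chi cs (-i) := by
  have := simple_conj_chi hm cs i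
  calc chi cs i * cs.simple 0
      = cs.simple 0 * (cs.simple 0 * chi cs i * cs.simple 0) := by
        rw [← mul_assoc, ← mul_assoc, cs.simple_mul_simple_self, one_mul]
    _ = cs.simple 0 * chi cs (-i) := by rw [this]

/-- the inverse map `DihedralGroup m → W` -/
noncomputable def gfun : DihedralGroup m → W
  | DihedralGroup.r i => chi cs i
  | DihedralGroup.sr i => cs.simple 0 * chi cs i

include hm in
theorem gfun_mul (x y : DihedralGroup m) :
    gfun cs (x * y) = gfun cs x * gfun cs y := by
  cases x with
  | r i =>
      cases y with
      | r j => show chi cs (i + j) = chi cs i * chi cs j; exact chi_add hm cs i j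
      | sr j =>
          show cs.simple 0 * chi cs (j - i) = chi cs i * (cs.simple 0 * chi cs j)
          rw [← mul_assoc, chi_mul_simple hm, mul_assoc, ← chi_add hm]
          congr 1
          ring_nf
  | sr i =>
      cases y with
      | r j =>
          show cs.simple 0 * chi cs (i + j) = cs.simple 0 * chi cs i * chi cs j
          rw [mul_assoc, chi_add hm]
      | sr j =>
          show chi cs (j - i) = cs.simple 0 * chi cs i * (cs.simple 0 * chi cs j)
          rw [mul_assoc, ← mul_assoc (chi cs i), chi_mul_simple hm, ← mul_assoc,
            ← mul_assoc, cs.simple_mul_simple_self, one_mul, ← chi_add hm]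
          congr 1
          ring_nf

/-- the lift `W →* DihedralGroup m` -/
noncomputable def fHom : W →* DihedralGroup m :=
  cs.lift ⟨fun i : Fin 2 => (sr (i.val : ZMod m) : DihedralGroup m), liftable_sr hm⟩

include hm in
theorem fHom_simple (i : Fin 2) : fHom hm cs (cs.simple i) = sr ((i.val : ℕ) : ZMod m) :=
  cs.lift_apply_simple (liftable_sr hm) i

/-- the group isomorphism between an abstract `I₂(m)` Coxeter group and the dihedral group -/
noncomputable def csEquiv : W ≃* DihedralGroup m where
  toFun := fHom hm cs
  invFun := gfun cs
  map_mul' := map_mul _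
  left_inv := by
    intro w
    have hcomp : (MonoidHom.mk' (gfun cs) (gfun_mul hm cs)).comp (fHom hm cs) =
        MonoidHom.id W := by
      refine cs.ext_simple ?_
      intro i
      fin_cases i
      · show gfun cs (fHom hm cs (cs.simple 0)) = cs.simple 0
        rw [fHom_simple hm]
        show gfun cs (sr ((0 : ℕ) : ZMod m)) = cs.simple 0
        show cs.simple 0 * chi cs ((0 : ℕ) : ZMod m) = cs.simple 0
        rw [Nat.cast_zero, chi_zero, mul_one]
      · show gfun cs (fHom hm cs (cs.simple 1)) = cs.simple 1
        rw [fHom_simple hm]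
        show cs.simple 0 * chi cs ((1 : ℕ) : ZMod m) = cs.simple 1
        rw [Nat.cast_one]
        have hv : (1 : ZMod m).val = 1 := by
          haveI : Fact (1 < m) := ⟨hm⟩
          exact ZMod.val_one m
        rw [chi, hv, pow_one, csx, ← mul_assoc, cs.simple_mul_simple_self, one_mul]
    exact DFunLike.congr_fun hcomp w
  right_inv := by
    intro z
    have hx : fHom hm cs (csx cs) = DihedralGroup.r 1 := by
      rw [csx, map_mul, fHom_simple hm, fHom_simple hm]
      show (sr ((0:ℕ) : ZMod m) : DihedralGroup m) * sr ((1:ℕ) : ZMod m) = r 1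
      rw [sr_mul_sr]
      push_cast
      rw [sub_zero]
    have hchi : ∀ i : ZMod m, fHom hm cs (chi cs i) = DihedralGroup.r i := by
      intro i
      rw [chi, map_pow, hx, r_one_pow, ZMod.natCast_rightInverse i]
    cases z with
    | r i => exact hchi i
    | sr i =>
        show fHom hm cs (cs.simple 0 * chi cs i) = sr i
        rw [map_mul, fHom_simple hm, hchi]
        show (sr ((0 : ℕ) : ZMod m) : DihedralGroup m) * r i = sr i
        rw [Nat.cast_zero, sr_mul_r, zero_add]

include hm in
theorem csEquiv_simple (i : Fin 2) :
    csEquiv hm cs (cs.simple i) = sr ((i.val : ℕ) : ZMod m) := fHom_simple hm cs i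

end Iso
end CoxeterSide


open DihedralGroup in
/-- The contingency metamatrix of the Coxeter system of type `I₂(m)` (`m ≥ 2`), i.e. the
dihedral system with `(s₁ s₂)^m = 1` (recall that `CoxeterMatrix.I k` has off-diagonal
entry `k + 2`), equals `!![2m, 2m, 1; 2m, 2m+2, 2; 1, 2, 1]`. -/
theorem metamatrix_I2m (m : ℕ) (hm : 2 ≤ m) (W : Type*) [Group W]
    (cs : CoxeterSystem (CoxeterMatrix.I (m - 2)) W) :
    metamatrix cs = !![2 * m, 2 * m, 1; 2 * m, 2 * m + 2, 2; 1, 2, 1] := by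
  haveI : NeZero m := ⟨by omega⟩
  -- powerset computations
  have hp0 : (Finset.univ : Finset (Fin 2)).powersetCard 0 = {∅} := by decide
  have hp1 : (Finset.univ : Finset (Fin 2)).powersetCard 1 =
      {({0} : Finset (Fin 2)), {1}} := by decide
  have hp2 : (Finset.univ : Finset (Fin 2)).powersetCard 2 = {Finset.univ} := by decide
  -- parabolic computations
  have hPe : parabolic cs ((∅ : Finset (Fin 2)) : Set (Fin 2)) = ⊥ := by
    simp [parabolic]
  have hP0 : parabolic cs (({0} : Finset (Fin 2)) : Set (Fin 2)) =
      Subgroup.closure {cs.simple 0} := by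
    simp [parabolic]
  have hP1 : parabolic cs (({1} : Finset (Fin 2)) : Set (Fin 2)) =
      Subgroup.closure {cs.simple 1} := by
    simp [parabolic]
  have hPu : parabolic cs ((Finset.univ : Finset (Fin 2)) : Set (Fin 2)) = ⊤ := by
    rw [parabolic, Finset.coe_univ, Set.image_univ]
    exact cs.subgroup_closure_range_simple
  -- the isomorphism with the dihedral group
  set e := csEquiv hm cs with he
  have cardW : Nat.card W = 2 * m := by
    rw [Nat.card_congr e.toEquiv, Nat.card_eq_fintype_card, DihedralGroup.card]
  have hmape : ∀ j : Fin 2, (Subgroup.closure {cs.simple j}).map e.toMonoidHom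
      = Subgroup.closure {(sr ((j.val : ℕ) : ZMod m) : DihedralGroup m)} := by
    intro j
    rw [MonoidHom.map_closure, Set.image_singleton]
    have h : e.toMonoidHom (cs.simple j) = sr ((j.val : ℕ) : ZMod m) := by
      simp only [MulEquiv.coe_toMonoidHom]
      exact csEquiv_simple hm cs j
    rw [h]
  have cardK : ∀ j : Fin 2, Nat.card (Subgroup.closure {cs.simple j}) = 2 := by
    intro j
    have h1 : Nat.card (Subgroup.closure {cs.simple j}) =
        Nat.card ((Subgroup.closure {cs.simple j}).map e.toMonoidHom) :=
      Nat.card_congr (Subgroup.equivMapOfInjective _ _ e.injective).toEquiv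
    rw [h1, hmape j, card_closure_sr]
  -- entry values
  have c_bb : Nat.card (DoubleCoset.Quotient ((⊥ : Subgroup W) : Set W)
      ((⊥ : Subgroup W) : Set W)) = 2 * m := by
    rw [doset_card_map e, Subgroup.map_bot, doset_card_bot_bot,
      Nat.card_eq_fintype_card, DihedralGroup.card]
  have c_bs : ∀ j : Fin 2, Nat.card (DoubleCoset.Quotient ((⊥ : Subgroup W) : Set W)
      ((Subgroup.closure {cs.simple j} : Subgroup W) : Set W)) = m := by
    intro j
    have h := doset_card_bot_left (Subgroup.closure {cs.simple j})
    rw [cardK j, cardW] at h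
    omega
  have c_sb : ∀ j : Fin 2, Nat.card (DoubleCoset.Quotient
      ((Subgroup.closure {cs.simple j} : Subgroup W) : Set W)
      ((⊥ : Subgroup W) : Set W)) = m := by
    intro j
    have h := doset_card_bot_right (Subgroup.closure {cs.simple j})
    rw [cardK j, cardW] at h
    omega
  have c_ss : ∀ i j : Fin 2, Nat.card (DoubleCoset.Quotient
      ((Subgroup.closure {cs.simple i} : Subgroup W) : Set W)
      ((Subgroup.closure {cs.simple j} : Subgroup W) : Set W)) =
      Nat.card (Quotient (pairSetoid (((j.val : ℕ) : ZMod m) - ((i.val : ℕ) : ZMod m)))) := by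
    intro i j
    rw [doset_card_map e, hmape i, hmape j]
    exact Nat.card_congr (dosetSrEquiv _ _)
  have hsum11 : Nat.card (Quotient (pairSetoid (((0:ℕ) : ZMod m) - ((0:ℕ) : ZMod m)))) +
      Nat.card (Quotient (pairSetoid (((1:ℕ) : ZMod m) - ((0:ℕ) : ZMod m)))) +
      (Nat.card (Quotient (pairSetoid (((0:ℕ) : ZMod m) - ((1:ℕ) : ZMod m)))) +
      Nat.card (Quotient (pairSetoid (((1:ℕ) : ZMod m) - ((1:ℕ) : ZMod m))))) = 2 * m + 2 := by
    have e00 : (((0:ℕ) : ZMod m) - ((0:ℕ) : ZMod m)) = 0 := by push_cast; ring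
    have e10 : (((1:ℕ) : ZMod m) - ((0:ℕ) : ZMod m)) = 1 := by push_cast; ring
    have e01 : (((0:ℕ) : ZMod m) - ((1:ℕ) : ZMod m)) = -1 := by push_cast; ring
    have e11 : (((1:ℕ) : ZMod m) - ((1:ℕ) : ZMod m)) = 0 := by push_cast; ring
    rw [e00, e10, e01, e11]
    have h0 := two_mul_card_pairQuotient (m := m) 0
    have h1 := two_mul_card_pairQuotient (m := m) 1
    have hn := two_mul_card_pairQuotient (m := m) (-1)
    have ht := tcard_zero_add_one (m := m) hm
    have htn := tcard_neg (m := m) 1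
    omega
  -- top entries
  have c_topR : ∀ H : Subgroup W, Nat.card (DoubleCoset.Quotient (H : Set W)
      ((⊤ : Subgroup W) : Set W)) = 1 := fun H => doset_card_top_right H
  have c_topL : ∀ K : Subgroup W, Nat.card (DoubleCoset.Quotient ((⊤ : Subgroup W) : Set W)
      (K : Set W)) = 1 := fun K => doset_card_top_left K
  -- now compute all entries
  have hins : ({0} : Finset (Fin 2)) ∉ ({{1}} : Finset (Finset (Fin 2))) := by decide
  have hmk2 : ∀ (h : 2 < 3), (⟨2, h⟩ : Fin 3) = 2 := fun _ => rfl
  ext p q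
  fin_cases p <;> fin_cases q <;>
    simp only [metamatrix, Matrix.of_apply, Fin.isValue, Fin.val_zero, Fin.val_one,
      Fin.val_two, hp0, hp1, hp2, Finset.sum_insert hins, Finset.sum_singleton,
      hPe, hP0, hP1, hPu, c_bb, c_bs, c_sb, c_ss, c_topR, c_topL, Fin.mk_zero, Fin.mk_one] <;>
    simp only [hmk2, Matrix.cons_val', Matrix.cons_val_zero, Matrix.cons_val_one,
      Matrix.head_cons, Matrix.cons_val_two, Matrix.tail_cons, Matrix.empty_val',
      Matrix.cons_val_fin_one, Matrix.head_fin_const] <;>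
    omega
end
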